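/- arXiv:math/9812131 — 9 statements merged into one kernel-verified Lean document; each statement's English description precedes it below -/
import Mathlib

section
/- There exist real numbers m₁, m₂ such that the rational function f(z) = (z − m₁)(z − m₂)(m₁·z + 1)(m₂·z + 1)/z² on ℂ \ {0} satisfies: (1) f(−1/conj(z)) = conj(f(z)) for all z ≠ 0; (2) f(z) ≠ 0 whenever |z| = 1; (3) the contour integral of f(z)/z over the positively oriented unit circle equals 0 (equivalently, the residue of f(z)/z·dz at 0 vanishes). -/
/-!
Write `f z / z = N z / z ^ 3` with `N` the quartic numerator. Expanding `N` into monomials, only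
`z⁻¹` has a nonzero integral over the circle, so the integral is `2πi` times the coefficient of
`z ^ 2` in `N`, namely `1 + (ab)² - (a + b)²`. For `a = 2` this vanishes exactly when
`3b² - 4b - 3 = 0`, e.g. for `b = (2 + √13)/3`. The roots `a, b, -1/a, -1/b` of `N` are permuted by
the antipodal map `z ↦ -1 / conj z`, which gives the symmetry, and none lies on the unit circle
as `|a|, |b| ≠ 1`.
-/

open ComplexConjugate
open Polynomial Complex Metric Set
open scoped Real

theorem circleIntegral_sub_zpow (c : ℂ) {R : ℝ} (hR : R ≠ 0) (n : ℤ) :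
    (∮ z in C(c, R), (z - c) ^ n) = if n = -1 then 2 * π * I else 0 := by
  split_ifs with hn
  · simpa [hn] using circleIntegral.integral_sub_center_inv c hR
  · exact circleIntegral.integral_sub_zpow_of_ne hn c c R

theorem circleIntegral_eval_sub_div_sub_pow (p : ℂ[X]) (c : ℂ) {R : ℝ} (hR : 0 < R) (n : ℕ) :
    (∮ z in C(c, R), p.eval (z - c) / (z - c) ^ (n + 1)) = 2 * π * I * p.coeff n := by
  have h_laurent : EqOn (fun z => p.eval (z - c) / (z - c) ^ (n + 1))
      (fun z => ∑ i ∈ p.support, p.coeff i * (z - c) ^ ((i : ℤ) - (n + 1))) (sphere c R) := by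
    intro z hz
    have hzc : z - c ≠ 0 := sub_ne_zero.2 (ne_of_mem_sphere hz hR.ne')
    simp only [eval_eq_sum, Polynomial.sum_def, Finset.sum_div, zpow_sub₀ hzc, zpow_natCast,
      mul_div_assoc]
    norm_cast
  have h_integrable (i : ℕ) :
      CircleIntegrable (fun z => p.coeff i * (z - c) ^ ((i : ℤ) - (n + 1))) c R :=
    (circleIntegrable_sub_zpow_iff.2 (.inr (.inr (by simp [(abs_pos.2 hR.ne').ne])))).const_mul _
  have h_residue (i : ℕ) : (i : ℤ) - (n + 1) = -1 ↔ i = n := by omega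
  rw [circleIntegral.integral_congr hR.le h_laurent,
    circleIntegral.integral_fun_sum fun i _ => h_integrable i]
  simp only [circleIntegral.integral_const_mul, circleIntegral_sub_zpow c hR.ne', h_residue,
    mul_ite, mul_zero, Finset.sum_ite_eq', mem_support_iff, ne_eq, ite_not]
  split_ifs with h
  · simp [h]
  · ring

noncomputable def antipodalLaurent (a b : ℝ) (z : ℂ) : ℂ :=
  (z - a) * (z - b) * (a * z + 1) * (b * z + 1) / z ^ 2

theorem antipodalLaurent_neg_inv_conj (a b : ℝ) {z : ℂ} (hz : z ≠ 0) :
    antipodalLaurent a b (-1 / conj z) = conj (antipodalLaurent a b z) := by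
  have hz' : conj z ≠ 0 := by simpa using hz
  simp only [antipodalLaurent, map_div₀, map_mul, map_sub, map_add, map_pow, map_one,
    conj_ofReal]
  field_simp
  ring

theorem antipodalLaurent_ne_zero {a b : ℝ} (ha : |a| ≠ 1) (hb : |b| ≠ 1) {z : ℂ}
    (hz : ‖z‖ = 1) : antipodalLaurent a b z ≠ 0 := by
  have h_root (m : ℝ) (hm : |m| ≠ 1) : z - m ≠ 0 := by
    rw [sub_ne_zero]; rintro rfl; simp_all
  have h_coroot (m : ℝ) (hm : |m| ≠ 1) : (m : ℂ) * z + 1 ≠ 0 := by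
    rw [← sub_neg_eq_add, sub_ne_zero]
    intro h
    apply_fun (‖·‖) at h
    simp_all
  have hz0 : z ≠ 0 := by rintro rfl; simp at hz
  unfold antipodalLaurent
  exact div_ne_zero (mul_ne_zero (mul_ne_zero (mul_ne_zero (h_root a ha) (h_root b hb))
    (h_coroot a ha)) (h_coroot b hb)) (pow_ne_zero 2 hz0)

theorem circleIntegral_antipodalLaurent_div (a b : ℝ) {R : ℝ} (hR : 0 < R) :
    (∮ z in C(0, R), antipodalLaurent a b z / z) =
      2 * π * I * (1 + (a * b) ^ 2 - (a + b) ^ 2) := by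
  have h_coeff : ((X - C (a : ℂ)) * (X - C (b : ℂ)) * (C (a : ℂ) * X + 1) *
      (C (b : ℂ) * X + 1)).coeff 2 = 1 + ((a : ℂ) * b) ^ 2 - ((a : ℂ) + b) ^ 2 := by
    simp [coeff_mul, Finset.Nat.antidiagonal_succ, coeff_X, coeff_C, coeff_one]
    ring
  rw [← h_coeff, ← circleIntegral_eval_sub_div_sub_pow _ 0 hR]
  congr 1 with z
  simp [antipodalLaurent, div_div, pow_succ]

/-- Lemma 2 of the paper: there exist real numbers `m₁, m₂` such that
`f(z) = (z − m₁)(z − m₂)(m₁z + 1)(m₂z + 1)/z²` satisfies `f(−1/conj z) = conj (f z)` for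
`z ≠ 0`, has no zeros on the unit circle, and `∮ f(z)/z dz = 0` over the unit circle. -/
theorem stmt_1 :
    ∃ m₁ m₂ : ℝ, ∃ f : ℂ → ℂ,
      (∀ z : ℂ, f z =
        (z - (m₁ : ℂ)) * (z - (m₂ : ℂ)) * ((m₁ : ℂ) * z + 1) * ((m₂ : ℂ) * z + 1) / z ^ 2) ∧
      (∀ z : ℂ, z ≠ 0 → f (-1 / conj z) = conj (f z)) ∧
      (∀ z : ℂ, ‖z‖ = 1 → f z ≠ 0) ∧
      (∮ z in C(0, 1), f z / z) = 0 := by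
  set m : ℝ := (2 + √13) / 3 with hm
  have h_sqrt : √13 ^ 2 = 13 := Real.sq_sqrt (by norm_num)
  have h_abs : |m| ≠ 1 := by
    have : 3 < √13 := by nlinarith [Real.sqrt_nonneg 13]
    rw [abs_of_pos (by positivity)]
    linarith [hm]
  have h_residue : 1 + (2 * m) ^ 2 - (2 + m) ^ 2 = 0 := by
    linear_combination h_sqrt / 3
  refine ⟨2, m, antipodalLaurent 2 m, fun z => rfl,
    fun z hz => antipodalLaurent_neg_inv_conj 2 m hz,
    fun z hz => antipodalLaurent_ne_zero (by norm_num) h_abs hz, ?_⟩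
  rw [circleIntegral_antipodalLaurent_div 2 m one_pos]
  norm_cast
  simp [h_residue]
end

section
/- Let α, β ∈ ℂ \ {0} with α ∉ {β, −1/conj(β)}, and define h(z) = i/((z − α)(z − β)(conj(α)·z + 1)(conj(β)·z + 1)). Then for every z ∈ ℂ \ {0, α, β, −1/conj(α), −1/conj(β)}, one has h(−1/conj(z))·(1/conj(z)²) = −conj(h(z)·z²). -/
open ComplexConjugate

/-!
The denominator of `h` is the product of the quadratics `(z - a)(conj a * z + 1)` for `a = α, β`,
whose roots `a` and `-1/conj a` are exchanged by `z ↦ -1/conj z`. Under this involution each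
quadratic becomes `-conj(·)/conj z ^ 2`, so `h (-1/conj z) = I * conj z ^ 4 / conj (denominator)`,
and `conj I = -I` supplies the sign.
-/

section
variable {K : Type*} [Field K] [StarRing K]

def antipodalFactor (a z : K) : K := (z - a) * (conj a * z + 1)

theorem antipodalFactor_neg_inv_conj (a : K) {z : K} (hz : z ≠ 0) :
    antipodalFactor a (-1 / conj z) = -conj (antipodalFactor a z) / conj z ^ 2 := by
  have hcz : conj z ≠ 0 := (map_ne_zero _).mpr hz
  simp only [antipodalFactor, map_mul, map_add, map_sub, map_one, starRingEnd_self_apply]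
  field_simp
  ring

end

theorem stmt_8_general (α β : ℂ)
    (h : ℂ → ℂ)
    (hh : ∀ z : ℂ, h z =
      Complex.I / ((z - α) * (z - β) * (conj α * z + 1) * (conj β * z + 1)))
    (z : ℂ) (hz : z ∉ ({0, α, β, -1 / conj α, -1 / conj β} : Set ℂ)) :
    h (-1 / conj z) * (1 / conj z ^ 2) = -conj (h z * z ^ 2) := by
  have hz0 : z ≠ 0 := fun h0 => hz (by simp [h0])
  have hcz : conj z ≠ 0 := (map_ne_zero _).mpr hz0
  have hfactor : ∀ w, h w = Complex.I / (antipodalFactor α w * antipodalFactor β w) := fun w => by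
    rw [hh, antipodalFactor, antipodalFactor]; ring
  rw [hfactor, hfactor, antipodalFactor_neg_inv_conj α hz0, antipodalFactor_neg_inv_conj β hz0]
  simp only [map_mul, map_div₀, map_pow, Complex.conj_I]
  field_simp

/-- Transformation law `Î*(η̂) = −conj(η̂ ĝ²)` for `η̂ = h(z)dz`, `ĝ(z) = z`, under
`Î(z) = −1/conj z`, where `h(z) = i/((z−α)(z−β)(conj α·z+1)(conj β·z+1))`. -/
theorem stmt_8 (α β : ℂ) (hα : α ≠ 0) (hβ : β ≠ 0) (hαβ : α ≠ β) (hαβ' : α ≠ -1 / conj β)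
    (h : ℂ → ℂ)
    (hh : ∀ z : ℂ, h z =
      Complex.I / ((z - α) * (z - β) * (conj α * z + 1) * (conj β * z + 1)))
    (z : ℂ) (hz : z ∉ ({0, α, β, -1 / conj α, -1 / conj β} : Set ℂ)) :
    h (-1 / conj z) * (1 / conj z ^ 2) = -conj (h z * z ^ 2) :=
  stmt_8_general α β h hh z hz
end

section
/- Let α, β ∈ ℂ \ {0} with α ∉ {β, −1/conj(β)}, let h(z) = i/((z − α)(z − β)(conj(α)·z + 1)(conj(β)·z + 1)), and define φ₁(z) = (1/2)·(1 − z²)·h(z), φ₂(z) = (i/2)·(1 + z²)·h(z), φ₃(z) = z·h(z). Then for every z ∈ ℂ \ {0, α, β, −1/conj(α), −1/conj(β)} and each j = 1, 2, 3, one has φⱼ(−1/conj(z))·(1/conj(z)²) = conj(φⱼ(z)). -/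
open ComplexConjugate

/-!
Write `w = conj z`. The denominator `D` of `h` satisfies `D (-1/w) = conj (D z) / w⁴`, so
`h (-1/w) = -w⁴ · conj (h z)`. Each factor `f` with `φⱼ = f · h` (coming from the Gauss map
`ĝ(z) = z`) satisfies `f (-1/w) · (-w²) = conj (f z)`, and the powers of `w` cancel.
-/

def weierstrassDenom (α β z : ℂ) : ℂ :=
  (z - α) * (z - β) * (conj α * z + 1) * (conj β * z + 1)

lemma weierstrassDenom_neg_inv_conj (α β : ℂ) {z : ℂ} (hz : z ≠ 0) :
    weierstrassDenom α β (-1 / conj z) = conj (weierstrassDenom α β z) / conj z ^ 4 := by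
  have hw : conj z ≠ 0 := (map_ne_zero _).mpr hz
  simp only [weierstrassDenom, map_mul, map_sub, map_add, map_one, Complex.conj_conj]
  field_simp
  ring

lemma neg_inv_conj_of_eq_I_div_weierstrassDenom {α β : ℂ} {h : ℂ → ℂ}
    (hh : ∀ z, h z = Complex.I / weierstrassDenom α β z) {z : ℂ} (hz : z ≠ 0) :
    h (-1 / conj z) = -conj z ^ 4 * conj (h z) := by
  rw [hh, hh, weierstrassDenom_neg_inv_conj α β hz, map_div₀, Complex.conj_I, div_div_eq_mul_div]
  ring

lemma mul_neg_inv_conj {f h : ℂ → ℂ} {z : ℂ} (hz : z ≠ 0)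
    (hf : f (-1 / conj z) * -conj z ^ 2 = conj (f z))
    (hh : h (-1 / conj z) = -conj z ^ 4 * conj (h z)) :
    f (-1 / conj z) * h (-1 / conj z) * (1 / conj z ^ 2) = conj (f z * h z) := by
  have hw : conj z ≠ 0 := (map_ne_zero _).mpr hz
  rw [map_mul, ← hf, hh]
  field_simp

theorem stmt_9_general (α β : ℂ)
    (h φ₁ φ₂ φ₃ : ℂ → ℂ)
    (hh : ∀ z : ℂ, h z =
      Complex.I / ((z - α) * (z - β) * (conj α * z + 1) * (conj β * z + 1)))
    (hφ₁ : ∀ z : ℂ, φ₁ z = (1 / 2) * (1 - z ^ 2) * h z)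
    (hφ₂ : ∀ z : ℂ, φ₂ z = (Complex.I / 2) * (1 + z ^ 2) * h z)
    (hφ₃ : ∀ z : ℂ, φ₃ z = z * h z)
    (z : ℂ) (hz : z ∉ ({0, α, β, -1 / conj α, -1 / conj β} : Set ℂ)) :
    φ₁ (-1 / conj z) * (1 / conj z ^ 2) = conj (φ₁ z) ∧
    φ₂ (-1 / conj z) * (1 / conj z ^ 2) = conj (φ₂ z) ∧
    φ₃ (-1 / conj z) * (1 / conj z ^ 2) = conj (φ₃ z) := by
  have hz0 : z ≠ 0 := fun h0 => hz (by simp [h0])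
  have hw : conj z ≠ 0 := (map_ne_zero _).mpr hz0
  have h_inv_conj := neg_inv_conj_of_eq_I_div_weierstrassDenom hh hz0
  refine ⟨?_, ?_, ?_⟩
  · rw [hφ₁, hφ₁]
    refine mul_neg_inv_conj (f := fun z => 1 / 2 * (1 - z ^ 2)) hz0 ?_ h_inv_conj
    simp only [map_mul, map_sub, map_pow, map_one, map_div₀, map_ofNat]
    field_simp
    ring
  · rw [hφ₂, hφ₂]
    refine mul_neg_inv_conj (f := fun z => Complex.I / 2 * (1 + z ^ 2)) hz0 ?_ h_inv_conj
    simp only [map_mul, map_add, map_pow, map_one, map_div₀, map_ofNat, Complex.conj_I]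
    field_simp
    ring
  · rw [hφ₃, hφ₃]
    refine mul_neg_inv_conj (f := id) hz0 ?_ h_inv_conj
    simp only [id]
    field_simp

/-- The Weierstrass forms `Φ̂ⱼ = φⱼ(z)dz` built from `ĝ(z) = z`, `η̂ = h(z)dz` satisfy
`Î*(Φ̂ⱼ) = conj Φ̂ⱼ` for the antiholomorphic involution `Î(z) = −1/conj z`. -/
theorem stmt_9 (α β : ℂ) (hα : α ≠ 0) (hβ : β ≠ 0) (hαβ : α ≠ β) (hαβ' : α ≠ -1 / conj β)
    (h φ₁ φ₂ φ₃ : ℂ → ℂ)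
    (hh : ∀ z : ℂ, h z =
      Complex.I / ((z - α) * (z - β) * (conj α * z + 1) * (conj β * z + 1)))
    (hφ₁ : ∀ z : ℂ, φ₁ z = (1 / 2) * (1 - z ^ 2) * h z)
    (hφ₂ : ∀ z : ℂ, φ₂ z = (Complex.I / 2) * (1 + z ^ 2) * h z)
    (hφ₃ : ∀ z : ℂ, φ₃ z = z * h z)
    (z : ℂ) (hz : z ∉ ({0, α, β, -1 / conj α, -1 / conj β} : Set ℂ)) :
    φ₁ (-1 / conj z) * (1 / conj z ^ 2) = conj (φ₁ z) ∧
    φ₂ (-1 / conj z) * (1 / conj z ^ 2) = conj (φ₂ z) ∧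
    φ₃ (-1 / conj z) * (1 / conj z ^ 2) = conj (φ₃ z) :=
  stmt_9_general α β h φ₁ φ₂ φ₃ hh hφ₁ hφ₂ hφ₃ z hz
end

section
/- Let α, β ∈ ℂ \ {0} with α ∉ {β, −1/conj(β)}, let S = {α, β, −1/conj(α), −1/conj(β)}, and let h(z) = i/((z − α)(z − β)(conj(α)·z + 1)(conj(β)·z + 1)). Then for every p ∈ S and every C¹ path γ : [0,1) → ℂ \ S with γ(t) → p as t → 1, the length of γ with respect to the conformal metric (1/2)·(1 + |z|²)·|h(z)|·|dz| is infinite: ∫₀¹ (1/2)·(1 + |γ(t)|²)·|h(γ(t))|·|γ'(t)| dt = ∞. -/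
open ComplexConjugate Set MeasureTheory Filter Topology
open scoped RealInnerProductSpace

/-!
Near a puncture `p` the quartic denominator of `h` has a simple zero (the four punctures are
distinct), so the density of the metric is at least `c / |z - p|`. In the metric `|dz| / |z - p|`
the length of a path is at least the total decrease of `log |γ - p|`, which is infinite for a
path tending to `p`.
-/

section

variable {F : Type*} [NormedAddCommGroup F] [InnerProductSpace ℝ F]

theorem HasDerivAt.log_norm {f : ℝ → F} {f' : F} {x : ℝ} (hf : HasDerivAt f f' x)
    (hx : f x ≠ 0) :
    HasDerivAt (fun t => Real.log ‖f t‖) (⟪f x, f'⟫ / ‖f x‖ ^ 2) x := by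
  have hlog : (fun t => Real.log ‖f t‖) = fun t => Real.log (‖f t‖ ^ 2) / 2 := by
    funext t
    rw [Real.log_pow]
    ring
  rw [hlog]
  exact ((hf.norm_sq.log (pow_ne_zero 2 (norm_ne_zero_iff.mpr hx))).div_const 2).congr_deriv
    (by ring)

theorem neg_inner_div_norm_sq_le (x y : F) : -(⟪x, y⟫ / ‖x‖ ^ 2) ≤ ‖y‖ / ‖x‖ := by
  rcases eq_or_ne x 0 with rfl | hx
  · simp
  have hx' : 0 < ‖x‖ := norm_pos_iff.mpr hx
  rw [← neg_div, div_le_div_iff₀ (by positivity) hx']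
  nlinarith [real_inner_le_norm x (-y), inner_neg_right (𝕜 := ℝ) x y, norm_neg y]

theorem ofReal_log_norm_sub_log_norm_le_lintegral {f f' : ℝ → F} {a b : ℝ} (hab : a ≤ b)
    (hf : ∀ t ∈ Icc a b, HasDerivAt f (f' t) t) (hf' : ContinuousOn f' (Icc a b))
    (hne : ∀ t ∈ Icc a b, f t ≠ 0) :
    ENNReal.ofReal (Real.log ‖f a‖ - Real.log ‖f b‖) ≤
      ∫⁻ t in Ioc a b, ENNReal.ofReal (‖f' t‖ / ‖f t‖) := by
  have hlog t (ht : t ∈ Icc a b) := ((hf t ht).log_norm (hne t ht)).neg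
  have hcont : ContinuousOn (fun t => ‖f' t‖ / ‖f t‖) (Icc a b) :=
    hf'.norm.div (ContinuousOn.norm fun t ht => (hf t ht).continuousAt.continuousWithinAt)
      fun t ht => norm_ne_zero_iff.mpr (hne t ht)
  have hFTC := intervalIntegral.sub_le_integral_of_hasDeriv_right_of_le hab
    (fun t ht => (hlog t ht).continuousAt.continuousWithinAt)
    (fun t ht => (hlog t (Ioo_subset_Icc_self ht)).hasDerivWithinAt) hcont.integrableOn_Icc
    (fun t _ => neg_inner_div_norm_sq_le (f t) (f' t))
  simp only [Pi.neg_apply, intervalIntegral.integral_of_le hab] at hFTC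
  rw [← ofReal_integral_eq_lintegral_ofReal
    ((hcont.integrableOn_Icc).mono_set Ioc_subset_Icc_self)
    (Eventually.of_forall fun t => by positivity)]
  exact ENNReal.ofReal_le_ofReal (by linarith)

variable {γ dγ : ℝ → F} {p : F} {a b : ℝ}

theorem lintegral_norm_deriv_div_norm_sub_eq_top (hab : a < b) (hγ : ∀ t ∈ Ioo a b, γ t ≠ p)
    (hderiv : ∀ t ∈ Ioo a b, HasDerivAt γ (dγ t) t) (hcont : ContinuousOn dγ (Ioo a b))
    (hlim : Tendsto γ (𝓝[<] b) (𝓝 p)) :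
    ∫⁻ t in Ioo a b, ENNReal.ofReal (‖dγ t‖ / ‖γ t - p‖) = ⊤ := by
  obtain ⟨s, has, hsb⟩ := exists_between hab
  have hlog : Tendsto (fun t => Real.log ‖γ t - p‖) (𝓝[<] b) atBot := by
    refine Real.tendsto_log_nhdsGT_zero.comp (tendsto_nhdsWithin_iff.mpr ⟨?_, ?_⟩)
    · simpa using (hlim.sub_const p).norm
    · filter_upwards [Ioo_mem_nhdsLT hab] with t ht
      exact norm_pos_iff.mpr (sub_ne_zero.mpr (hγ t ht))
  refine ENNReal.eq_top_of_forall_nnreal_le fun M => ?_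
  obtain ⟨u, hu_log, hu⟩ := ((hlog.eventually
    (eventually_le_atBot (Real.log ‖γ s - p‖ - M))).and (Ioo_mem_nhdsLT hsb)).exists
  have hsub : Icc s u ⊆ Ioo a b := Icc_subset_Ioo has hu.2
  calc (M : ENNReal) = ENNReal.ofReal M := (ENNReal.ofReal_coe_nnreal).symm
    _ ≤ ENNReal.ofReal (Real.log ‖γ s - p‖ - Real.log ‖γ u - p‖) :=
        ENNReal.ofReal_le_ofReal (by linarith)
    _ ≤ ∫⁻ t in Ioc s u, ENNReal.ofReal (‖dγ t‖ / ‖γ t - p‖) :=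
        ofReal_log_norm_sub_log_norm_le_lintegral (f := fun t => γ t - p) hu.1.le
          (fun t ht => (hderiv t (hsub ht)).sub_const p) (hcont.mono hsub)
          fun t ht => sub_ne_zero.mpr (hγ t (hsub ht))
    _ ≤ _ := lintegral_mono_set (Ioc_subset_Icc_self.trans hsub)

theorem lintegral_ofReal_mul_norm_deriv_eq_top {Φ : F → ℝ} {c : ℝ} (hc : 0 < c)
    (hΦ : ∀ᶠ z in 𝓝 p, c / ‖z - p‖ ≤ Φ z) (hab : a < b) (hγ : ∀ t ∈ Ioo a b, γ t ≠ p)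
    (hderiv : ∀ t ∈ Ioo a b, HasDerivAt γ (dγ t) t) (hcont : ContinuousOn dγ (Ioo a b))
    (hlim : Tendsto γ (𝓝[<] b) (𝓝 p)) :
    ∫⁻ t in Ioo a b, ENNReal.ofReal (Φ (γ t) * ‖dγ t‖) = ⊤ := by
  obtain ⟨a', ha'b, hΦγ⟩ := mem_nhdsLT_iff_exists_Ioo_subset.mp (hlim.eventually hΦ)
  have hsub : Ioo (max a a') b ⊆ Ioo a b := Ioo_subset_Ioo_left (le_max_left _ _)
  have hlen := lintegral_norm_deriv_div_norm_sub_eq_top (max_lt hab ha'b)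
    (fun t ht => hγ t (hsub ht)) (fun t ht => hderiv t (hsub ht)) (hcont.mono hsub) hlim
  refine top_le_iff.mp ?_
  calc ⊤ = ENNReal.ofReal c *
        ∫⁻ t in Ioo (max a a') b, ENNReal.ofReal (‖dγ t‖ / ‖γ t - p‖) := by
        rw [hlen, ENNReal.mul_top (by simpa using hc)]
    _ = ∫⁻ t in Ioo (max a a') b, ENNReal.ofReal (c / ‖γ t - p‖ * ‖dγ t‖) := by
        rw [← lintegral_const_mul' _ _ ENNReal.ofReal_ne_top]
        congr 1 with t
        rw [← ENNReal.ofReal_mul hc.le, div_mul_comm, mul_comm]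
    _ ≤ ∫⁻ t in Ioo (max a a') b, ENNReal.ofReal (Φ (γ t) * ‖dγ t‖) :=
        setLIntegral_mono' measurableSet_Ioo fun t ht => ENNReal.ofReal_le_ofReal <|
          mul_le_mul_of_nonneg_right (hΦγ ⟨(le_max_right a a').trans_lt ht.1, ht.2⟩)
            (norm_nonneg _)
    _ ≤ _ := lintegral_mono_set hsub

end

theorem exists_div_norm_sub_le_inv_norm_sub_mul {𝕜 : Type*} [NormedField 𝕜] {P : 𝕜 → 𝕜}
    {p : 𝕜} (hP : ContinuousAt P p) (hPp : P p ≠ 0) :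
    ∃ c > 0, ∀ᶠ z in 𝓝 p, c / ‖z - p‖ ≤ ‖(z - p) * P z‖⁻¹ := by
  have hnorm : 0 < ‖P p‖ := norm_pos_iff.mpr hPp
  refine ⟨(2 * ‖P p‖)⁻¹, by positivity, ?_⟩
  filter_upwards [hP.eventually_ne hPp,
    hP.norm.eventually (gt_mem_nhds (by linarith : ‖P p‖ < 2 * ‖P p‖))] with z hz0 hz
  rw [norm_mul, mul_inv ‖z - p‖, div_eq_inv_mul]
  exact mul_le_mul_of_nonneg_left (inv_anti₀ (norm_pos_iff.mpr hz0) hz.le) (by positivity)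

theorem exists_div_norm_sub_le_inv_norm_mul_prod_sub {𝕜 ι : Type*} [NormedField 𝕜]
    [Fintype ι] [DecidableEq ι] {r : ι → 𝕜} (hr : Function.Injective r) {κ : 𝕜} (hκ : κ ≠ 0)
    (j : ι) : ∃ c > 0, ∀ᶠ z in 𝓝 (r j), c / ‖z - r j‖ ≤ ‖κ * ∏ i, (z - r i)‖⁻¹ := by
  have hsplit (z : 𝕜) :
      κ * ∏ i, (z - r i) = (z - r j) * (κ * ∏ i ∈ Finset.univ.erase j, (z - r i)) := by
    rw [← Finset.mul_prod_erase _ _ (Finset.mem_univ j)]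
    ring
  simp only [hsplit]
  refine exists_div_norm_sub_le_inv_norm_sub_mul (by fun_prop) (mul_ne_zero hκ ?_)
  exact Finset.prod_ne_zero_iff.mpr fun i hi =>
    sub_ne_zero.mpr (hr.ne (Finset.ne_of_mem_erase hi).symm)

theorem ne_neg_one_div_conj {z : ℂ} (hz : z ≠ 0) : z ≠ -1 / conj z := by
  rw [Ne, eq_div_iff (by simpa using hz), Complex.mul_conj]
  intro h
  have := congrArg Complex.re h
  simp only [Complex.ofReal_re, Complex.neg_re, Complex.one_re] at this
  linarith [Complex.normSq_nonneg z]

theorem eq_neg_one_div_conj_comm {z w : ℂ} (hz : z ≠ 0) (hw : w ≠ 0) :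
    z = -1 / conj w ↔ w = -1 / conj z := by
  rw [eq_div_iff (by simpa using hw), eq_div_iff (by simpa using hz),
    ← (starRingEnd ℂ).injective.eq_iff]
  simp [mul_comm]

theorem injective_punctures {α β : ℂ} (hα : α ≠ 0) (hβ : β ≠ 0) (hαβ : α ≠ β)
    (hαβ' : α ≠ -1 / conj β) :
    Function.Injective ![α, β, -1 / conj α, -1 / conj β] := by
  have h1 := ne_neg_one_div_conj hα
  have h2 := ne_neg_one_div_conj hβ
  have h3 : β ≠ -1 / conj α := fun h => hαβ' ((eq_neg_one_div_conj_comm hβ hα).mp h)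
  have h4 : -1 / conj α ≠ -1 / conj β := fun h =>
    hαβ (by simpa [neg_div] using congrArg conj h)
  intro i j hij
  fin_cases i <;> fin_cases j <;> simp_all [eq_comm]

theorem quartic_eq_mul_prod {α β : ℂ} (hα : α ≠ 0) (hβ : β ≠ 0) (z : ℂ) :
    (z - α) * (z - β) * (conj α * z + 1) * (conj β * z + 1) =
      conj α * conj β * ∏ i, (z - ![α, β, -1 / conj α, -1 / conj β] i) := by
  have hα' : conj α ≠ 0 := by simpa using hα
  have hβ' : conj β ≠ 0 := by simpa using hβ
  simp only [Fin.prod_univ_four, Matrix.cons_val]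
  field_simp
  ring

theorem exists_div_norm_sub_le_metric_density {α β : ℂ} (hα : α ≠ 0) (hβ : β ≠ 0)
    (hαβ : α ≠ β) (hαβ' : α ≠ -1 / conj β) (j : Fin 4) :
    ∃ c > 0, ∀ᶠ z in 𝓝 (![α, β, -1 / conj α, -1 / conj β] j),
      c / ‖z - ![α, β, -1 / conj α, -1 / conj β] j‖ ≤ 1 / 2 * (1 + ‖z‖ ^ 2) *
        ‖Complex.I / ((z - α) * (z - β) * (conj α * z + 1) * (conj β * z + 1))‖ := by
  set r := ![α, β, -1 / conj α, -1 / conj β]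
  obtain ⟨c, hc, hpole⟩ := exists_div_norm_sub_le_inv_norm_mul_prod_sub
    (injective_punctures hα hβ hαβ hαβ') (κ := conj α * conj β)
    (mul_ne_zero (by simpa using hα) (by simpa using hβ)) j
  refine ⟨c / 2, half_pos hc, ?_⟩
  filter_upwards [hpole] with z hz
  calc c / 2 / ‖z - r j‖ = 1 / 2 * (c / ‖z - r j‖) := by ring
    _ ≤ 1 / 2 * (1 + ‖z‖ ^ 2) * ‖conj α * conj β * ∏ i, (z - r i)‖⁻¹ := by
      rw [mul_assoc]
      gcongr
      exact hz.trans
        (le_mul_of_one_le_left (by positivity) (le_add_of_nonneg_right (by positivity)))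
    _ = _ := by rw [quartic_eq_mul_prod hα hβ, norm_div, Complex.norm_I, inv_eq_one_div]

/-- Completeness of the metric `(1/2)(1+|z|²)|h(z)||dz|` at the punctures: every C¹ path in
`ℂ \ S` converging to a point of `S = {α, β, −1/conj α, −1/conj β}` has infinite length. -/
theorem stmt_10 (α β : ℂ) (hα : α ≠ 0) (hβ : β ≠ 0) (hαβ : α ≠ β) (hαβ' : α ≠ -1 / conj β)
    (S : Set ℂ) (hS : S = {α, β, -1 / conj α, -1 / conj β})
    (h : ℂ → ℂ)
    (hh : ∀ z : ℂ, h z =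
      Complex.I / ((z - α) * (z - β) * (conj α * z + 1) * (conj β * z + 1)))
    (p : ℂ) (hp : p ∈ S)
    (γ dγ : ℝ → ℂ)
    (hγmem : ∀ t ∈ Ico (0 : ℝ) 1, γ t ∉ S)
    (hγderiv : ∀ t ∈ Ico (0 : ℝ) 1, HasDerivAt γ (dγ t) t)
    (hdγcont : ContinuousOn dγ (Ico (0 : ℝ) 1))
    (hlim : Filter.Tendsto γ (nhdsWithin 1 (Iio (1 : ℝ))) (nhds p)) :
    ∫⁻ t in Ioo (0 : ℝ) 1,
      ENNReal.ofReal ((1 / 2) * (1 + ‖γ t‖ ^ 2) * ‖h (γ t)‖ *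
        ‖dγ t‖) = ⊤ := by
  subst hS
  obtain rfl : h = fun z =>
      Complex.I / ((z - α) * (z - β) * (conj α * z + 1) * (conj β * z + 1)) := funext hh
  obtain ⟨j, rfl⟩ : ∃ j, ![α, β, -1 / conj α, -1 / conj β] j = p := by
    rcases hp with rfl | rfl | rfl | rfl
    exacts [⟨0, rfl⟩, ⟨1, rfl⟩, ⟨2, rfl⟩, ⟨3, rfl⟩]
  obtain ⟨c, hc, hdensity⟩ := exists_div_norm_sub_le_metric_density hα hβ hαβ hαβ' j
  exact lintegral_ofReal_mul_norm_deriv_eq_top hc hdensity one_pos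
    (fun t ht heq => hγmem t (Ioo_subset_Ico_self ht) (heq ▸ hp))
    (fun t ht => hγderiv t (Ioo_subset_Ico_self ht)) (hdγcont.mono Ioo_subset_Ico_self) hlim
end

section
/- Let F map the punctured open unit disc 𝔻* = {z ∈ ℂ : 0 < |z| < 1} into itself, suppose the map z ↦ F(conj(z)) is holomorphic on 𝔻*, and suppose F(F(z)) = z for all z ∈ 𝔻*. Then there exists θ ∈ ℝ such that F(z) = e^{iθ}·conj(z) for all z ∈ 𝔻*; in particular F has a fixed point in 𝔻*. -/
/-!
Precomposing with conjugation turns `F` into a holomorphic automorphism `G` of `𝔻*`, with inverse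
`conj ∘ F`. A bounded holomorphic function has a removable singularity at `0`, and the extension
must send `0` to `0`: a value in `𝔻*` would be sent back to `0` by the continuous inverse, and a
value on the unit circle is excluded by the maximum principle. The Schwarz lemma applied to the
extensions of `G` and of its inverse gives `‖G z‖ = ‖z‖`, so by its equality case `G` is a
rotation `z ↦ e^{iθ} z`. The map `z ↦ e^{iθ} conj z` fixes the ray through `e^{iθ/2}`.
-/

open ComplexConjugate Set Metric Filter Topology Function

local notation "𝔻*" => ball (0 : ℂ) 1 \ {0}

lemma setOf_norm_pos_and_norm_lt_one : {z : ℂ | 0 < ‖z‖ ∧ ‖z‖ < 1} = 𝔻* := by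
  ext z
  simp [and_comm]

lemma preimage_conj_punctured_disc : conj ⁻¹' 𝔻* = 𝔻* := by
  ext z
  simp

lemma DifferentiableOn.conj_conj {f : ℂ → ℂ} {s : Set ℂ} (hf : DifferentiableOn ℂ f s)
    (hs : IsOpen s) : DifferentiableOn ℂ (conj ∘ f ∘ conj) (conj ⁻¹' s) := fun _ hz =>
  (differentiableAt_conj_conj_iff.2 <|
    hf.differentiableAt (hs.mem_nhds hz)).differentiableWithinAt

lemma map_eq_of_tendsto_of_leftInvOn {X Y : Type*} [TopologicalSpace X] [T2Space X]
    [TopologicalSpace Y] {G : X → Y} {H : Y → X} {s : Set X} {c : X} {a : Y} [(𝓝[s] c).NeBot]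
    (hG : Tendsto G (𝓝[s] c) (𝓝 a)) (hH : ContinuousAt H a) (hHG : LeftInvOn H G s) :
    H a = c :=
  tendsto_nhds_unique (hH.tendsto.comp hG) <|
    (tendsto_nhdsWithin_of_tendsto_nhds tendsto_id).congr' <|
      eventuallyEq_nhdsWithin_of_eqOn fun _ hz => (hHG hz).symm

lemma mapsTo_ball_of_mapsTo_closedBall {F : Type*} [NormedAddCommGroup F] [NormedSpace ℂ F]
    {f : ℂ → F} {c z₀ : ℂ} {r R : ℝ} (hd : DifferentiableOn ℂ f (ball c r))
    (hmaps : MapsTo f (ball c r) (closedBall 0 R)) (hz₀ : z₀ ∈ ball c r) (hlt : ‖f z₀‖ < R) :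
    MapsTo f (ball c r) (ball 0 R) := by
  intro z hz
  by_contra hzR
  have hmax : IsMaxOn (norm ∘ f) (ball c r) z := fun w hw =>
    (mem_closedBall_zero_iff.1 (hmaps hw)).trans (not_lt.1 (mem_ball_zero_iff.not.1 hzR))
  have hconst := Complex.norm_eqOn_of_isPreconnected_of_isMaxOn
    (convex_ball c r).isPreconnected isOpen_ball hd hz hmax hz₀
  simp only [comp_apply, const_apply] at hconst
  exact hzR (mem_ball_zero_iff.2 (hconst ▸ hlt))

lemma norm_eq_norm_of_leftInvOn {g h : ℂ → ℂ} {R : ℝ} (hgd : DifferentiableOn ℂ g (ball 0 R))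
    (hgm : MapsTo g (ball 0 R) (ball 0 R)) (hg0 : g 0 = 0) (hhd : DifferentiableOn ℂ h (ball 0 R))
    (hhm : MapsTo h (ball 0 R) (ball 0 R)) (hh0 : h 0 = 0) (hhg : LeftInvOn h g (ball 0 R))
    {z : ℂ} (hz : z ∈ ball 0 R) : ‖g z‖ = ‖z‖ := by
  refine le_antisymm (Complex.norm_le_norm_of_mapsTo_ball hgd
    (hgm.mono_right ball_subset_closedBall) hg0 (mem_ball_zero_iff.1 hz)) ?_
  calc ‖z‖ = ‖h (g z)‖ := by rw [hhg hz]
    _ ≤ ‖g z‖ := Complex.norm_le_norm_of_mapsTo_ball hhd (hhm.mono_right ball_subset_closedBall)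
      hh0 (mem_ball_zero_iff.1 (hgm hz))

lemma exists_norm_eq_one_eqOn_mul_of_norm_eq {g : ℂ → ℂ} {R : ℝ} {z₀ : ℂ}
    (hgd : DifferentiableOn ℂ g (ball 0 R)) (hgm : MapsTo g (ball 0 R) (closedBall 0 R))
    (hg0 : g 0 = 0) (hz₀ : z₀ ∈ ball 0 R) (hz₀0 : z₀ ≠ 0) (heq : ‖g z₀‖ = ‖z₀‖) :
    ∃ c : ℂ, ‖c‖ = 1 ∧ EqOn g (c * ·) (ball 0 R) := by
  have hR : R ≠ 0 := (pos_of_mem_ball hz₀).ne'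
  have hslope : ‖dslope g 0 z₀‖ = R / R := by
    rw [dslope_of_ne _ hz₀0, slope_def_field, hg0, sub_zero, sub_zero, norm_div, heq,
      div_self (norm_ne_zero_iff.2 hz₀0), div_self hR]
  obtain ⟨c, hc, hgc⟩ := Complex.affine_of_mapsTo_ball_of_exists_norm_dslope_eq_div' hgd
    (by rwa [hg0]) ⟨z₀, hz₀, hslope⟩
  exact ⟨c, hc.trans (div_self hR), fun z hz => by simpa [hg0, mul_comm] using hgc hz⟩

section PuncturedDisc

variable {G H : ℂ → ℂ}

lemma mapsTo_update_zero (hGm : MapsTo G 𝔻* 𝔻*) :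
    MapsTo (update G 0 0) (ball 0 1) (ball 0 1) := by
  intro z hz
  rcases eq_or_ne z 0 with rfl | hz0
  · simp
  · simpa [update_of_ne hz0] using (hGm ⟨hz, hz0⟩).1

lemma leftInvOn_update_zero (hGm : MapsTo G 𝔻* 𝔻*) (hHG : LeftInvOn H G 𝔻*) :
    LeftInvOn (update H 0 0) (update G 0 0) (ball 0 1) := by
  intro z hz
  rcases eq_or_ne z 0 with rfl | hz0
  · simp
  · have hGz := hGm ⟨hz, hz0⟩
    simp [update_of_ne hz0, update_of_ne hGz.2, hHG ⟨hz, hz0⟩]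

lemma differentiableOn_update_zero_of_leftInvOn (hGd : DifferentiableOn ℂ G 𝔻*)
    (hGm : MapsTo G 𝔻* 𝔻*) (hHc : ContinuousOn H 𝔻*) (hHm : MapsTo H 𝔻* 𝔻*)
    (hHG : LeftInvOn H G 𝔻*) : DifferentiableOn ℂ (update G 0 0) (ball 0 1) := by
  have hbdd : BddAbove (norm ∘ G '' 𝔻*) := ⟨1, by
    rintro _ ⟨z, hz, rfl⟩
    exact (mem_ball_zero_iff.1 (hGm hz).1).le⟩
  set g := update G 0 (limUnder (𝓝[≠] 0) G)
  have hgd : DifferentiableOn ℂ g (ball 0 1) :=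
    Complex.differentiableOn_update_limUnder_of_bddAbove (ball_mem_nhds _ one_pos) hGd hbdd
  have hgG : EqOn g G 𝔻* := fun z hz => update_of_ne hz.2 _ _
  have hlim : Tendsto G (𝓝[𝔻*] 0) (𝓝 (g 0)) :=
    ((hgd.continuousOn.continuousAt (ball_mem_nhds _ one_pos)).tendsto.mono_left
      nhdsWithin_le_nhds).congr' (eventuallyEq_nhdsWithin_of_eqOn hgG)
  have : (𝓝[𝔻*] (0 : ℂ)).NeBot := by
    rw [sdiff_eq, nhdsWithin_inter_of_mem (mem_nhdsWithin_of_mem_nhds (ball_mem_nhds _ one_pos))]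
    infer_instance
  have hg0_le : ‖g 0‖ ≤ 1 := le_of_tendsto hlim.norm <|
    eventually_nhdsWithin_of_forall fun z hz => (mem_ball_zero_iff.1 (hGm hz).1).le
  have hgm : MapsTo g (ball 0 1) (ball 0 1) := by
    refine mapsTo_ball_of_mapsTo_closedBall hgd (fun z hz => ?_) (z₀ := 1 / 2) ?_ ?_
    · rcases eq_or_ne z 0 with rfl | hz0
      · exact mem_closedBall_zero_iff.2 hg0_le
      · exact ball_subset_closedBall (hgG ⟨hz, hz0⟩ ▸ (hGm ⟨hz, hz0⟩).1)
    · norm_num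
    · have h : (1 / 2 : ℂ) ∈ 𝔻* := by norm_num
      exact mem_ball_zero_iff.1 (hgG h ▸ (hGm h).1)
  have hg0 : g 0 = 0 := by
    by_contra hne
    have hmem : g 0 ∈ 𝔻* := ⟨hgm (mem_ball_self one_pos), hne⟩
    exact (hHm hmem).2 <| map_eq_of_tendsto_of_leftInvOn hlim
      (hHc.continuousAt (isOpen_ball.sdiff isClosed_singleton |>.mem_nhds hmem)) hHG
  have hlim0 : limUnder (𝓝[≠] 0) G = 0 := by simpa [g] using hg0
  simpa only [g, hlim0] using hgd

theorem exists_norm_eq_one_eqOn_mul_of_invOn_punctured_disc (hGd : DifferentiableOn ℂ G 𝔻*)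
    (hGm : MapsTo G 𝔻* 𝔻*) (hHd : DifferentiableOn ℂ H 𝔻*) (hHm : MapsTo H 𝔻* 𝔻*)
    (hinv : InvOn H G 𝔻* 𝔻*) : ∃ c : ℂ, ‖c‖ = 1 ∧ EqOn G (c * ·) 𝔻* := by
  set g := update G 0 0
  have hgd := differentiableOn_update_zero_of_leftInvOn hGd hGm hHd.continuousOn hHm hinv.1
  have hhd := differentiableOn_update_zero_of_leftInvOn hHd hHm hGd.continuousOn hGm hinv.2
  have hhalf : (1 / 2 : ℂ) ∈ ball 0 1 := by norm_num
  have hnorm : ‖g (1 / 2)‖ = ‖(1 / 2 : ℂ)‖ :=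
    norm_eq_norm_of_leftInvOn hgd (mapsTo_update_zero hGm) (update_self _ _ _) hhd
      (mapsTo_update_zero hHm) (update_self _ _ _) (leftInvOn_update_zero hGm hinv.1) hhalf
  obtain ⟨c, hc, hgc⟩ := exists_norm_eq_one_eqOn_mul_of_norm_eq hgd
    ((mapsTo_update_zero hGm).mono_right ball_subset_closedBall) (update_self _ _ _) hhalf
    (by norm_num) hnorm
  exact ⟨c, hc, fun z hz => by simpa [g, update_of_ne hz.2] using hgc hz.1⟩

end PuncturedDisc

lemma exp_mul_I_mul_conj_ofReal_mul_exp_half (θ r : ℝ) :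
    Complex.exp (θ * Complex.I) * conj (r * Complex.exp ((θ / 2 : ℝ) * Complex.I)) =
      r * Complex.exp ((θ / 2 : ℝ) * Complex.I) := by
  rw [map_mul, Complex.conj_ofReal, ← Complex.exp_conj, map_mul, Complex.conj_ofReal,
    Complex.conj_I, mul_left_comm, ← Complex.exp_add]
  congr 2
  push_cast
  ring

/-- Every antiholomorphic involution `F` of the punctured unit disc `𝔻*` is of the form
`F(z) = e^{iθ} conj z`; in particular `F` has a fixed point in `𝔻*`. -/
theorem stmt_11 (F : ℂ → ℂ)
    (hmaps : MapsTo F {z : ℂ | 0 < ‖z‖ ∧ ‖z‖ < 1}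
      {z : ℂ | 0 < ‖z‖ ∧ ‖z‖ < 1})
    (hanti : DifferentiableOn ℂ (fun z => F (conj z))
      {z : ℂ | 0 < ‖z‖ ∧ ‖z‖ < 1})
    (hinv : ∀ z ∈ {z : ℂ | 0 < ‖z‖ ∧ ‖z‖ < 1}, F (F z) = z) :
    (∃ θ : ℝ, ∀ z ∈ {z : ℂ | 0 < ‖z‖ ∧ ‖z‖ < 1},
      F z = Complex.exp (θ * Complex.I) * conj z) ∧
    ∃ z ∈ {z : ℂ | 0 < ‖z‖ ∧ ‖z‖ < 1}, F z = z := by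
  simp only [setOf_norm_pos_and_norm_lt_one] at hmaps hanti hinv ⊢
  have hconj : ∀ z, conj z ∈ 𝔻* ↔ z ∈ 𝔻* := fun z => by
    rw [← mem_preimage, preimage_conj_punctured_disc]
  have hHd : DifferentiableOn ℂ (conj ∘ F) 𝔻* := by
    have h := hanti.conj_conj (isOpen_ball.sdiff isClosed_singleton)
    rw [preimage_conj_punctured_disc] at h
    simpa [comp_def] using h
  obtain ⟨c, hc, hG⟩ := exists_norm_eq_one_eqOn_mul_of_invOn_punctured_disc hanti
    (fun z hz => hmaps ((hconj z).2 hz)) hHd (fun z hz => (hconj _).2 (hmaps hz))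
    ⟨fun z hz => by simp [hinv _ ((hconj z).2 hz)], fun z hz => by simp [hinv z hz]⟩
  obtain ⟨θ, rfl⟩ := (Complex.norm_eq_one_iff c).1 hc
  have hF : ∀ z ∈ 𝔻*, F z = Complex.exp (θ * Complex.I) * conj z := fun z hz => by
    simpa using hG ((hconj z).2 hz)
  have hfix : ((1 / 2 : ℝ) : ℂ) * Complex.exp ((θ / 2 : ℝ) * Complex.I) ∈ 𝔻* := by
    simp only [Set.mem_sdiff, mem_ball_zero_iff, norm_mul, Complex.norm_exp_ofReal_mul_I,
      mem_singleton_iff, mul_eq_zero, Complex.exp_ne_zero, Complex.ofReal_eq_zero]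
    norm_num
  exact ⟨⟨θ, hF⟩, _, hfix, (hF _ hfix).trans (exp_mul_I_mul_conj_ofReal_mul_exp_half θ _)⟩
end

section
/- Let 𝔻 = {z ∈ ℂ : |z| < 1}, let F : 𝔻 → 𝔻 be such that z ↦ F(conj(z)) is holomorphic on 𝔻, and suppose F(F(z)) = z for all z ∈ 𝔻. Then F has a fixed point: there exists z ∈ 𝔻 with F(z) = z. -/
/-!
Let `G z = F (conj z)`, a holomorphic self-map of the disc, and `a = F 0 ≠ 0`. Since `F` is an
involution, `G` sends `0` to `a` and `conj a` to `0`, so `discSwap a ∘ G` fixes `0` and sends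
`conj a` to `a`, a point of the same modulus. By the equality case of the Schwarz lemma it is the
rotation `z ↦ (a / conj a) z`, hence `F z = discSwap a ((a / conj a) (conj z))`. The point
`a / (1 + √(1 - ‖a‖²))` is fixed both by the reflection `z ↦ (a / conj a) (conj z)` and by
`discSwap a`, hence by `F`.
-/

open ComplexConjugate Set Metric

namespace Complex

noncomputable def discSwap (a w : ℂ) : ℂ := (a - w) / (1 - conj a * w)

variable {a b w : ℂ}

theorem one_sub_conj_mul_ne_zero (ha : ‖a‖ < 1) (hw : ‖w‖ < 1) : 1 - conj a * w ≠ 0 := by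
  refine sub_ne_zero.2 fun h => ?_
  have : ‖conj a * w‖ < 1 := by
    rw [norm_mul, norm_conj]
    exact mul_lt_one_of_nonneg_of_lt_one_left (norm_nonneg a) ha hw.le
  simp [← h] at this

theorem normSq_one_sub_conj_mul_sub_normSq_sub (a w : ℂ) :
    normSq (1 - conj a * w) - normSq (a - w) = (1 - normSq a) * (1 - normSq w) := by
  simp only [normSq_apply, sub_re, sub_im, mul_re, mul_im, one_re, one_im, conj_re, conj_im]
  ring

@[simp] theorem discSwap_zero (a : ℂ) : discSwap a 0 = a := by simp [discSwap]

@[simp] theorem discSwap_self (a : ℂ) : discSwap a a = 0 := by simp [discSwap]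

theorem norm_discSwap_lt_one (ha : ‖a‖ < 1) (hw : ‖w‖ < 1) : ‖discSwap a w‖ < 1 := by
  have hd := one_sub_conj_mul_ne_zero ha hw
  rw [discSwap, norm_div, div_lt_one (norm_pos_iff.2 hd), ← sq_lt_sq₀ (norm_nonneg _)
    (norm_nonneg _), ← normSq_eq_norm_sq, ← normSq_eq_norm_sq, ← sub_pos,
    normSq_one_sub_conj_mul_sub_normSq_sub, normSq_eq_norm_sq, normSq_eq_norm_sq]
  have h1 : ‖a‖ ^ 2 < 1 := by nlinarith [norm_nonneg a]
  have h2 : ‖w‖ ^ 2 < 1 := by nlinarith [norm_nonneg w]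
  exact mul_pos (sub_pos.2 h1) (sub_pos.2 h2)

theorem mapsTo_discSwap (ha : ‖a‖ < 1) : MapsTo (discSwap a) (ball 0 1) (ball 0 1) :=
  fun _ hw => mem_ball_zero_iff.2 <| norm_discSwap_lt_one ha (mem_ball_zero_iff.1 hw)

theorem differentiableOn_discSwap (ha : ‖a‖ < 1) :
    DifferentiableOn ℂ (discSwap a) (ball 0 1) :=
  ((differentiableOn_const a).sub differentiableOn_id).div
    ((differentiableOn_const 1).sub ((differentiableOn_const _).mul differentiableOn_id))
    fun _ hw => one_sub_conj_mul_ne_zero ha (mem_ball_zero_iff.1 hw)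

theorem discSwap_discSwap (ha : ‖a‖ < 1) (hw : ‖w‖ < 1) : discSwap a (discSwap a w) = w := by
  have hd := one_sub_conj_mul_ne_zero ha hw
  have ha' : 1 - conj a * a ≠ 0 := one_sub_conj_mul_ne_zero ha ha
  have hnum : a - (a - w) / (1 - conj a * w) = w * (1 - conj a * a) / (1 - conj a * w) := by
    rw [eq_div_iff hd, sub_mul, div_mul_cancel₀ _ hd]
    ring
  have hden :
      1 - conj a * ((a - w) / (1 - conj a * w)) = (1 - conj a * a) / (1 - conj a * w) := by
    rw [eq_div_iff hd, sub_mul, ← mul_div_assoc, div_mul_cancel₀ _ hd]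
    ring
  rw [discSwap, discSwap, hnum, hden, div_div_div_cancel_right₀ hd, mul_div_assoc, div_self ha',
    mul_one]

theorem discSwap_div_one_add_sqrt (ha : ‖a‖ < 1) :
    discSwap a (a / ↑(1 + √(1 - ‖a‖ ^ 2))) = a / ↑(1 + √(1 - ‖a‖ ^ 2)) := by
  set s := √(1 - ‖a‖ ^ 2)
  have hs : s ^ 2 = 1 - ‖a‖ ^ 2 := Real.sq_sqrt (by nlinarith [norm_nonneg a])
  have hs0 : (s : ℂ) ≠ 0 :=
    ofReal_ne_zero.2 (Real.sqrt_pos.2 (by nlinarith [norm_nonneg a])).ne'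
  have hs1 : ((1 + s : ℝ) : ℂ) ≠ 0 := ofReal_ne_zero.2 (by positivity)
  have hden : 1 - conj a * (a / ↑(1 + s)) = s := by
    have hs' : (‖a‖ : ℂ) ^ 2 = 1 - (s : ℂ) ^ 2 := by
      exact_mod_cast (by linarith : ‖a‖ ^ 2 = 1 - s ^ 2)
    rw [← mul_div_assoc, conj_mul', hs']
    field_simp
    push_cast
    ring
  rw [discSwap, hden, div_eq_iff hs0]
  field_simp
  push_cast
  ring

theorem eqOn_mul_of_mapsTo_ball_of_norm_apply_eq {f : ℂ → ℂ} {b : ℂ}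
    (hd : DifferentiableOn ℂ f (ball 0 1)) (hmaps : MapsTo f (ball 0 1) (ball 0 1))
    (h0 : f 0 = 0) (hb : b ∈ ball 0 1) (hb0 : b ≠ 0) (hfb : ‖f b‖ = ‖b‖) :
    EqOn f (fun z => f b / b * z) (ball 0 1) := by
  have hslope : dslope f 0 b = f b / b := by
    rw [dslope_of_ne _ hb0, slope_def_field, h0, sub_zero, sub_zero]
  have hmaps' : MapsTo f (ball 0 1) (closedBall (f 0) 1) := by
    rw [h0]
    exact hmaps.mono_right ball_subset_closedBall
  intro z hz
  have := affine_of_mapsTo_ball_of_norm_dslope_eq_div hd hmaps' hb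
    (by rw [hslope, norm_div, hfb, div_self (norm_ne_zero_iff.2 hb0), div_one])
  simpa [h0, hslope, mul_comm] using this hz

theorem discSwap_comp_eqOn_mul {G : ℂ → ℂ} (hd : DifferentiableOn ℂ G (ball 0 1))
    (hmaps : MapsTo G (ball 0 1) (ball 0 1)) (hG0 : G 0 = a) (hb : b ∈ ball 0 1) (hb0 : b ≠ 0)
    (hGb : G b = 0) (hab : ‖b‖ = ‖a‖) :
    EqOn (discSwap a ∘ G) (fun z => a / b * z) (ball 0 1) := by
  have ha : ‖a‖ < 1 := mem_ball_zero_iff.1 (hG0 ▸ hmaps (mem_ball_self one_pos))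
  simpa [hGb] using eqOn_mul_of_mapsTo_ball_of_norm_apply_eq
    ((differentiableOn_discSwap ha).comp hd hmaps) ((mapsTo_discSwap ha).comp hmaps)
    (by simp [hG0]) hb hb0 (by simp [hGb, hab])

end Complex

open Complex in
/-- Every antiholomorphic involution of the open unit disc has a fixed point. -/
theorem stmt_12 (F : ℂ → ℂ)
    (hmaps : MapsTo F {z : ℂ | ‖z‖ < 1} {z : ℂ | ‖z‖ < 1})
    (hanti : DifferentiableOn ℂ (fun z => F (conj z)) {z : ℂ | ‖z‖ < 1})
    (hinv : ∀ z ∈ {z : ℂ | ‖z‖ < 1}, F (F z) = z) :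
    ∃ z ∈ {z : ℂ | ‖z‖ < 1}, F z = z := by
  simp only [← ball_zero_eq] at hmaps hanti hinv ⊢
  obtain ⟨a, hF0⟩ : ∃ a, F 0 = a := ⟨_, rfl⟩
  obtain rfl | ha0 := eq_or_ne a 0
  · exact ⟨0, mem_ball_self one_pos, hF0⟩
  have ha : ‖a‖ < 1 := mem_ball_zero_iff.1 (hF0 ▸ hmaps (mem_ball_self one_pos))
  have hFa : F a = 0 := hF0 ▸ hinv 0 (mem_ball_self one_pos)
  have hconj_mem {z : ℂ} (hz : z ∈ ball (0 : ℂ) 1) : conj z ∈ ball (0 : ℂ) 1 := by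
    simpa using hz
  set G := fun z => F (conj z)
  have hGmaps : MapsTo G (ball 0 1) (ball 0 1) := fun z hz => hmaps (hconj_mem hz)
  have hrot : EqOn (discSwap a ∘ G) (fun z => a / conj a * z) (ball 0 1) :=
    discSwap_comp_eqOn_mul hanti hGmaps (by simp [G, hF0]) (hconj_mem (mem_ball_zero_iff.2 ha))
      (by simpa using ha0) (by simp [G, hFa]) (norm_conj a)
  set z₀ := a / ↑(1 + √(1 - ‖a‖ ^ 2))
  have hz₀ : z₀ ∈ ball 0 1 := by
    rw [mem_ball_zero_iff, norm_div, norm_real, Real.norm_of_nonneg (by positivity)]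
    exact (div_le_self (norm_nonneg a) (le_add_of_nonneg_right (Real.sqrt_nonneg _))).trans_lt ha
  refine ⟨z₀, hz₀, ?_⟩
  calc F z₀ = discSwap a (discSwap a (G (conj z₀))) := by
        rw [discSwap_discSwap ha (mem_ball_zero_iff.1 (hGmaps (hconj_mem hz₀)))]
        simp [G]
    _ = discSwap a (a / conj a * conj z₀) := congrArg (discSwap a) (hrot (hconj_mem hz₀))
    _ = discSwap a z₀ := by
        have hca0 : conj a ≠ 0 := by simpa using ha0
        rw [map_div₀, conj_ofReal, ← mul_div_assoc, div_mul_cancel₀ a hca0]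
    _ = z₀ := discSwap_div_one_add_sqrt ha
end

section
/- Let R > 1, let A(R) = {z ∈ ℂ : 1/R < |z| < R}, and let F : A(R) → A(R) be such that z ↦ F(conj(z)) is holomorphic on A(R), F(F(z)) = z for all z ∈ A(R), and F(z) ≠ z for all z ∈ A(R). Then F(z) = −1/conj(z) for all z ∈ A(R). -/
/-!
`F` is a homeomorphism of the annulus, hence proper: it sends each end of `A(R)` to an end, and
since the collars `r < ‖z‖ < R` and `1/R < ‖z‖ < r` are connected, it either fixes both ends or
swaps them. In the first case `h z = F (conj z) / z`, in the second `h z = z * F (conj z)`, is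
holomorphic and zero-free with `‖h z‖ → 1` at both ends, so the maximum principle for `h` and
`1 / h` makes `h` a unimodular constant `c`. Then either `F z = c * conj z`, which fixes a square
root of `c`, or `F z = c / conj z`, where `F (F 1) = 1` gives `c ^ 2 = 1`, and `c = 1` would fix
`1`.
-/

open ComplexConjugate Set Filter Topology

def annulus (a b : ℝ) : Set ℂ := {z : ℂ | a < ‖z‖ ∧ ‖z‖ < b}

section Annulus

variable {a b : ℝ}

theorem isOpen_annulus (a b : ℝ) : IsOpen (annulus a b) :=
  isOpen_Ioo.preimage continuous_norm

theorem closure_annulus_subset (a b : ℝ) :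
    closure (annulus a b) ⊆ {z : ℂ | a ≤ ‖z‖ ∧ ‖z‖ ≤ b} :=
  closure_minimal (fun _ hz => ⟨hz.1.le, hz.2.le⟩) (isClosed_Icc.preimage continuous_norm)

theorem isCompact_closedAnnulus (a b : ℝ) : IsCompact {z : ℂ | a ≤ ‖z‖ ∧ ‖z‖ ≤ b} :=
  (isCompact_closedBall 0 b).of_isClosed_subset (isClosed_Icc.preimage continuous_norm)
    fun _ hz => mem_closedBall_zero_iff.2 hz.2

theorem isPreconnected_annulus (ha : 0 ≤ a) : IsPreconnected (annulus a b) := by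
  have : annulus a b = (fun p : ℝ × ℝ => (p.1 : ℂ) * Complex.exp (p.2 * Complex.I)) ''
      (Ioo a b ×ˢ univ) := by
    ext z
    constructor
    · rintro ⟨h1, h2⟩
      exact ⟨(‖z‖, z.arg), ⟨⟨h1, h2⟩, trivial⟩, Complex.norm_mul_exp_arg_mul_I z⟩
    · rintro ⟨⟨r, θ⟩, ⟨hr, -⟩, rfl⟩
      have hr0 : 0 ≤ r := ha.trans hr.1.le
      simpa [annulus, Complex.norm_exp_ofReal_mul_I, abs_of_nonneg hr0] using hr
  rw [this]
  exact (isPreconnected_Ioo.prod isPreconnected_univ).image _ (by fun_prop)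

theorem conj_mem_annulus {z : ℂ} (hz : z ∈ annulus a b) : conj z ∈ annulus a b := by
  simpa [annulus] using hz

theorem ne_zero_of_mem_annulus (ha : 0 ≤ a) {z : ℂ} (hz : z ∈ annulus a b) : z ≠ 0 :=
  norm_pos_iff.1 (ha.trans_lt hz.1)

theorem ofReal_mem_annulus (ha : 0 ≤ a) {r : ℝ} (hr : r ∈ Ioo a b) : (r : ℂ) ∈ annulus a b := by
  simpa [annulus, abs_of_nonneg (ha.trans hr.1.le)] using hr

end Annulus

theorem tendsto_nhdsGT_or_nhdsLT_of_isPreconnected {α : Type*} {l : Filter α} {g : α → ℝ}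
    {a b : ℝ} (hab : a < b) (hmem : ∀ᶠ x in l, g x ∈ Ioo a b)
    (hesc : ∀ r₁ r₂, a < r₁ → r₂ < b → ∀ᶠ x in l, g x ∉ Icc r₁ r₂)
    (hconn : ∀ s ∈ l, ∃ t ∈ l, t ⊆ s ∧ IsPreconnected (g '' t)) :
    Tendsto g l (𝓝[>] a) ∨ Tendsto g l (𝓝[<] b) := by
  obtain ⟨m, ham, hmb⟩ := exists_between hab
  obtain ⟨t, htl, hts, ht⟩ := hconn _ (hesc m m ham hmb)
  have hsplit : g '' t ⊆ Iio m ∪ Ioi m := by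
    rintro _ ⟨x, hx, rfl⟩
    exact Ne.lt_or_gt fun h => hts hx ⟨h.ge, h.le⟩
  rcases ht.subset_or_subset isOpen_Iio isOpen_Ioi (disjoint_left.2 fun _ h h' => lt_asymm h h')
    hsplit with hlt | hgt
  · refine Or.inl ((nhdsGT_basis a).tendsto_right_iff.2 fun r hr => ?_)
    filter_upwards [hmem, hesc (min r m) m (lt_min hr ham) hmb, htl] with x hx hxr hxt
    refine ⟨hx.1, lt_of_lt_of_le (not_le.1 fun h => hxr ⟨h, ?_⟩) (min_le_left r m)⟩
    exact (hlt (mem_image_of_mem g hxt)).le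
  · refine Or.inr ((nhdsLT_basis b).tendsto_right_iff.2 fun r hr => ?_)
    filter_upwards [hmem, hesc m (max r m) ham (max_lt hr hmb), htl] with x hx hxr hxt
    refine ⟨lt_of_le_of_lt (le_max_left r m) (not_le.1 fun h => hxr ⟨?_, h⟩), hx.2⟩
    exact (hgt (mem_image_of_mem g hxt)).le

theorem false_of_tendsto_of_involutive {α : Type*} {F : α → α} {l₁ l₂ : Filter α} [l₁.NeBot]
    (h₁ : Tendsto F l₁ l₂) (h₂ : Tendsto F l₂ l₂) (hinv : ∀ᶠ x in l₁, F (F x) = x)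
    (hd : Disjoint l₁ l₂) : False :=
  NeBot.ne' (hd.eq_bot_of_le ((h₂.comp h₁).congr' hinv))

noncomputable def innerEnd (a : ℝ) : Filter ℂ := comap norm (𝓝[>] a)

noncomputable def outerEnd (b : ℝ) : Filter ℂ := comap norm (𝓝[<] b)

section Ends

variable {a b : ℝ}

theorem innerEnd_le_principal (hab : a < b) : innerEnd a ≤ 𝓟 (annulus a b) :=
  le_principal_iff.2 (preimage_mem_comap (Ioo_mem_nhdsGT hab))

theorem outerEnd_le_principal (hab : a < b) : outerEnd b ≤ 𝓟 (annulus a b) :=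
  le_principal_iff.2 (preimage_mem_comap (Ioo_mem_nhdsLT hab))

theorem innerEnd_neBot (ha : 0 ≤ a) : (innerEnd a).NeBot :=
  nhdsGT_neBot a |>.comap_of_range_mem <| by
    rw [range_norm]; exact mem_of_superset self_mem_nhdsWithin fun _ hx => ha.trans (le_of_lt hx)

theorem outerEnd_neBot (hb : 0 < b) : (outerEnd b).NeBot :=
  nhdsLT_neBot b |>.comap_of_range_mem <| by
    rw [range_norm]; exact mem_of_superset (Ioo_mem_nhdsLT hb) fun _ hx => le_of_lt hx.1

theorem disjoint_innerEnd_outerEnd (hab : a < b) : Disjoint (innerEnd a) (outerEnd b) :=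
  disjoint_comap ((disjoint_nhds_nhds.2 hab.ne).mono nhdsWithin_le_nhds nhdsWithin_le_nhds)

theorem tendsto_conj_innerEnd : Tendsto conj (innerEnd a) (innerEnd a) := by
  unfold innerEnd
  exact tendsto_comap_iff.2 <| by simpa [Function.comp_def] using tendsto_comap

theorem tendsto_conj_outerEnd : Tendsto conj (outerEnd b) (outerEnd b) := by
  unfold outerEnd
  exact tendsto_comap_iff.2 <| by simpa [Function.comp_def] using tendsto_comap

theorem exists_isPreconnected_innerEnd (ha : 0 ≤ a) {s : Set ℂ} (hs : s ∈ innerEnd a) :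
    ∃ t ∈ innerEnd a, t ⊆ s ∧ IsPreconnected t := by
  obtain ⟨r, hr, hrs⟩ := ((nhdsGT_basis a).comap norm).mem_iff.1 hs
  exact ⟨annulus a r, ((nhdsGT_basis a).comap norm).mem_of_mem hr, hrs,
    isPreconnected_annulus ha⟩

theorem exists_isPreconnected_outerEnd (ha : 0 ≤ a) (hab : a < b) {s : Set ℂ}
    (hs : s ∈ outerEnd b) : ∃ t ∈ outerEnd b, t ⊆ s ∧ IsPreconnected t := by
  obtain ⟨r, hr, hrs⟩ := ((nhdsLT_basis b).comap norm).mem_iff.1 hs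
  refine ⟨annulus (max a r) b, ((nhdsLT_basis b).comap norm).mem_of_mem (max_lt hab hr),
    fun z hz => hrs ⟨(le_max_right a r).trans_lt hz.1, hz.2⟩,
    isPreconnected_annulus (ha.trans (le_max_left a r))⟩

end Ends

section Involution

variable {F : ℂ → ℂ} {a b : ℝ}

/-- If `F z` lies in the compact set `K = {r₁ ≤ ‖w‖ ≤ r₂}`, then `z = F (F z)` lies in the
compact set `F '' K ⊆ annulus a b`, whose norms stay away from `c`. -/
theorem eventually_norm_notMem_Icc_of_involutive
    (hmaps : MapsTo F (annulus a b) (annulus a b)) (hcont : ContinuousOn F (annulus a b))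
    (hinv : ∀ z ∈ annulus a b, F (F z) = z) {c r₁ r₂ : ℝ} (hc : c ∉ Ioo a b) (h₁ : a < r₁)
    (h₂ : r₂ < b) : ∀ᶠ z in comap norm (𝓝 c), z ∈ annulus a b → ‖F z‖ ∉ Icc r₁ r₂ := by
  set K := {w : ℂ | r₁ ≤ ‖w‖ ∧ ‖w‖ ≤ r₂}
  have hKA : K ⊆ annulus a b := fun w hw => ⟨h₁.trans_le hw.1, hw.2.trans_lt h₂⟩
  have hL : IsCompact (norm '' (F '' K)) :=
    ((isCompact_closedAnnulus r₁ r₂).image_of_continuousOn (hcont.mono hKA)).image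
      continuous_norm
  have hcL : c ∉ norm '' (F '' K) := by
    rintro ⟨_, ⟨w, hw, rfl⟩, rfl⟩
    exact hc (hmaps (hKA hw))
  filter_upwards [preimage_mem_comap (hL.isClosed.isOpen_compl.mem_nhds hcL)]
    with z hz hzA hFz
  exact hz ⟨F (F z), ⟨F z, hFz, rfl⟩, by rw [hinv z hzA]⟩

theorem tendsto_innerEnd_or_outerEnd_of_involutive (hab : a < b)
    (hmaps : MapsTo F (annulus a b) (annulus a b)) (hcont : ContinuousOn F (annulus a b))
    (hinv : ∀ z ∈ annulus a b, F (F z) = z) {l : Filter ℂ} {c : ℝ}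
    (hlA : l ≤ 𝓟 (annulus a b)) (hlc : l ≤ comap norm (𝓝 c)) (hc : c ∉ Ioo a b)
    (hconn : ∀ s ∈ l, ∃ t ∈ l, t ⊆ s ∧ IsPreconnected t) :
    Tendsto F l (innerEnd a) ∨ Tendsto F l (outerEnd b) := by
  have hA : ∀ᶠ z in l, z ∈ annulus a b := le_principal_iff.1 hlA
  simp only [innerEnd, outerEnd, tendsto_comap_iff]
  refine tendsto_nhdsGT_or_nhdsLT_of_isPreconnected hab (hA.mono fun z hz => hmaps hz)
    (fun r₁ r₂ h₁ h₂ => ?_) fun s hs => ?_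
  · filter_upwards [hlc (eventually_norm_notMem_Icc_of_involutive hmaps hcont hinv hc h₁ h₂), hA]
      with z hz hzA using hz hzA
  · obtain ⟨t, htl, hts, ht⟩ := hconn _ (inter_mem hs hA)
    exact ⟨t, htl, fun z hz => (hts hz).1,
      ht.image _ (continuous_norm.comp_continuousOn (hcont.mono fun z hz => (hts hz).2))⟩

theorem tendsto_ends_of_involutive (ha : 0 ≤ a) (hab : a < b)
    (hmaps : MapsTo F (annulus a b) (annulus a b)) (hcont : ContinuousOn F (annulus a b))
    (hinv : ∀ z ∈ annulus a b, F (F z) = z) :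
    (Tendsto F (innerEnd a) (innerEnd a) ∧ Tendsto F (outerEnd b) (outerEnd b)) ∨
      (Tendsto F (innerEnd a) (outerEnd b) ∧ Tendsto F (outerEnd b) (innerEnd a)) := by
  have := innerEnd_neBot ha
  have := outerEnd_neBot (ha.trans_lt hab)
  have hd := disjoint_innerEnd_outerEnd hab
  have hinv' : ∀ l ≤ 𝓟 (annulus a b), ∀ᶠ z in l, F (F z) = z := fun l hl =>
    mem_of_superset (le_principal_iff.1 hl) hinv
  rcases tendsto_innerEnd_or_outerEnd_of_involutive hab hmaps hcont hinv
      (innerEnd_le_principal hab) (comap_mono nhdsWithin_le_nhds) (lt_irrefl a ·.1)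
      fun _ => exists_isPreconnected_innerEnd ha with hii | hio <;>
    rcases tendsto_innerEnd_or_outerEnd_of_involutive hab hmaps hcont hinv
      (outerEnd_le_principal hab) (comap_mono nhdsWithin_le_nhds) (lt_irrefl b ·.2)
      fun _ => exists_isPreconnected_outerEnd ha hab with hoi | hoo
  -- If both ends went to the same end, `F ∘ F = id` would carry the other end there too.
  · exact (false_of_tendsto_of_involutive hoi hii (hinv' _ (outerEnd_le_principal hab))
      hd.symm).elim
  · exact Or.inl ⟨hii, hoo⟩
  · exact Or.inr ⟨hio, hoi⟩
  · exact (false_of_tendsto_of_involutive hio hoo (hinv' _ (innerEnd_le_principal hab)) hd).elim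

end Involution

section MaximumModulus

variable {a b : ℝ}

theorem norm_le_of_tendsto_norm_ends {E : Type*} [NormedAddCommGroup E] [NormedSpace ℂ E]
    {f : ℂ → E} {C : ℝ} (hf : DifferentiableOn ℂ f (annulus a b))
    (hi : Tendsto (‖f ·‖) (innerEnd a) (𝓝 C)) (ho : Tendsto (‖f ·‖) (outerEnd b) (𝓝 C))
    {z : ℂ} (hz : z ∈ annulus a b) : ‖f z‖ ≤ C := by
  -- Apply the maximum principle on a sub-annulus whose boundary circles carry `‖f‖ ≤ C + ε`.
  refine le_of_forall_pos_le_add fun ε hε => ?_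
  have hC : Iic (C + ε) ∈ 𝓝 C := Iic_mem_nhds (by linarith)
  obtain ⟨r₁, hr₁, hr₁z⟩ := ((eventually_comap.1 (hi hC)).and (Ioo_mem_nhdsGT hz.1)).exists
  obtain ⟨r₂, hr₂, hr₂z⟩ := ((eventually_comap.1 (ho hC)).and (Ioo_mem_nhdsLT hz.2)).exists
  have hsub : closure (annulus r₁ r₂) ⊆ annulus a b := fun w hw =>
    have hw' := closure_annulus_subset r₁ r₂ hw
    ⟨hr₁z.1.trans_le hw'.1, hw'.2.trans_lt hr₂z.2⟩
  refine Complex.norm_le_of_forall_mem_frontier_norm_le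
    (Metric.isBounded_ball.subset fun w hw => mem_ball_zero_iff.2 hw.2)
    (hf.mono hsub).diffContOnCl (fun w hw => ?_) (subset_closure ⟨hr₁z.2, hr₂z.1⟩)
  rw [(isOpen_annulus r₁ r₂).frontier_eq] at hw
  have hw' := closure_annulus_subset r₁ r₂ hw.1
  rcases hw'.1.eq_or_lt with h | h
  · exact hr₁ w h.symm
  · exact hr₂ w (hw'.2.eq_of_not_lt fun h' => hw.2 ⟨h, h'⟩)

theorem exists_eq_const_of_tendsto_norm_ends (ha : 0 ≤ a) (hab : a < b) {f : ℂ → ℂ}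
    (hf : DifferentiableOn ℂ f (annulus a b)) (hf0 : ∀ z ∈ annulus a b, f z ≠ 0)
    (hi : Tendsto (‖f ·‖) (innerEnd a) (𝓝 1)) (ho : Tendsto (‖f ·‖) (outerEnd b) (𝓝 1)) :
    ∃ c, ‖c‖ = 1 ∧ ∀ z ∈ annulus a b, f z = c := by
  have hle : ∀ z ∈ annulus a b, ‖f z‖ ≤ 1 := fun z => norm_le_of_tendsto_norm_ends hf hi ho
  have hge : ∀ z ∈ annulus a b, 1 ≤ ‖f z‖ := fun z hz => by
    have := norm_le_of_tendsto_norm_ends (f := fun z => (f z)⁻¹) (hf.inv hf0)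
      (by simpa using hi.inv₀ one_ne_zero) (by simpa using ho.inv₀ one_ne_zero) hz
    rw [norm_inv, inv_le_one_iff₀] at this
    exact this.resolve_left (norm_pos_iff.2 (hf0 z hz)).not_ge
  obtain ⟨m, ham, hmb⟩ := exists_between hab
  have hm : (m : ℂ) ∈ annulus a b := ofReal_mem_annulus ha ⟨ham, hmb⟩
  refine ⟨f m, le_antisymm (hle _ hm) (hge _ hm), fun z hz => ?_⟩
  refine Complex.eqOn_of_isPreconnected_of_isMaxOn_norm (isPreconnected_annulus ha)
    (isOpen_annulus a b) hf hm (fun w hw => ?_) hz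
  exact (hle w hw).trans (hge _ hm)

end MaximumModulus

theorem tendsto_norm_of_tendsto_innerEnd {α : Type*} {l : Filter α} {f : α → ℂ} {a : ℝ}
    (h : Tendsto f l (innerEnd a)) : Tendsto (‖f ·‖) l (𝓝 a) :=
  (tendsto_comap_iff.1 h).mono_right nhdsWithin_le_nhds

theorem tendsto_norm_of_tendsto_outerEnd {α : Type*} {l : Filter α} {f : α → ℂ} {b : ℝ}
    (h : Tendsto f l (outerEnd b)) : Tendsto (‖f ·‖) l (𝓝 b) :=
  (tendsto_comap_iff.1 h).mono_right nhdsWithin_le_nhds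

theorem mem_annulus_of_norm_eq_one {R : ℝ} (hR : 1 < R) {z : ℂ} (hz : ‖z‖ = 1) :
    z ∈ annulus (1 / R) R :=
  ⟨hz ▸ (div_lt_one (by linarith)).2 hR, hz ▸ hR⟩

theorem exists_norm_eq_one_mul_conj_eq {c : ℂ} (hc : ‖c‖ = 1) :
    ∃ w : ℂ, ‖w‖ = 1 ∧ c * conj w = w := by
  set w := c ^ ((2 : ℕ) : ℂ)⁻¹
  have hw2 : w ^ 2 = c := Complex.cpow_nat_inv_pow c two_ne_zero
  have hw : ‖w‖ = 1 := (pow_eq_one_iff_of_nonneg (norm_nonneg w) two_ne_zero).1 <| by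
    rw [← norm_pow, hw2, hc]
  refine ⟨w, hw, ?_⟩
  rw [← hw2, sq, mul_assoc, Complex.mul_conj', hw]
  simp

section Antiholomorphic

variable {F : ℂ → ℂ}

theorem exists_eq_mul_conj_of_tendsto_ends {a b : ℝ} (ha : 0 < a) (hab : a < b)
    (hmaps : MapsTo F (annulus a b) (annulus a b))
    (hanti : DifferentiableOn ℂ (fun z => F (conj z)) (annulus a b))
    (hi : Tendsto F (innerEnd a) (innerEnd a)) (ho : Tendsto F (outerEnd b) (outerEnd b)) :
    ∃ c, ‖c‖ = 1 ∧ ∀ z ∈ annulus a b, F z = c * conj z := by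
  have hb : b ≠ 0 := (ha.trans hab).ne'
  have hi' : Tendsto (fun z => ‖F (conj z) / z‖) (innerEnd a) (𝓝 1) := by
    have := (tendsto_norm_of_tendsto_innerEnd (hi.comp tendsto_conj_innerEnd)).div
      (tendsto_norm_of_tendsto_innerEnd tendsto_id) ha.ne'
    simpa [Function.comp_def, Pi.div_def, ha.ne'] using this
  have ho' : Tendsto (fun z => ‖F (conj z) / z‖) (outerEnd b) (𝓝 1) := by
    have := (tendsto_norm_of_tendsto_outerEnd (ho.comp tendsto_conj_outerEnd)).div
      (tendsto_norm_of_tendsto_outerEnd tendsto_id) hb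
    simpa [Function.comp_def, Pi.div_def, hb] using this
  obtain ⟨c, hc, hψ⟩ := exists_eq_const_of_tendsto_norm_ends ha.le hab
    (f := fun z => F (conj z) / z)
    (hanti.div differentiableOn_id fun z hz => ne_zero_of_mem_annulus ha.le hz)
    (fun z hz => div_ne_zero (ne_zero_of_mem_annulus ha.le (hmaps (conj_mem_annulus hz)))
      (ne_zero_of_mem_annulus ha.le hz)) hi' ho'
  refine ⟨c, hc, fun z hz => ?_⟩
  have h := hψ _ (conj_mem_annulus hz)
  simp only [Complex.conj_conj] at h
  rw [← h, div_mul_cancel₀ _ (ne_zero_of_mem_annulus ha.le (conj_mem_annulus hz))]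

theorem exists_eq_div_conj_of_tendsto_ends {R : ℝ} (hR : 1 < R)
    (hmaps : MapsTo F (annulus (1 / R) R) (annulus (1 / R) R))
    (hanti : DifferentiableOn ℂ (fun z => F (conj z)) (annulus (1 / R) R))
    (hi : Tendsto F (innerEnd (1 / R)) (outerEnd R))
    (ho : Tendsto F (outerEnd R) (innerEnd (1 / R))) :
    ∃ c, ‖c‖ = 1 ∧ ∀ z ∈ annulus (1 / R) R, F z = c / conj z := by
  have hR0 : 0 < R := by linarith
  have ha : 0 ≤ 1 / R := by positivity
  have hab : 1 / R < R := (div_lt_one hR0).2 hR |>.trans hR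
  have hi' : Tendsto (fun z => ‖z * F (conj z)‖) (innerEnd (1 / R)) (𝓝 1) := by
    have := (tendsto_norm_of_tendsto_innerEnd tendsto_id).mul
      (tendsto_norm_of_tendsto_outerEnd (hi.comp tendsto_conj_innerEnd))
    simpa [Function.comp_def, hR0.ne'] using this
  have ho' : Tendsto (fun z => ‖z * F (conj z)‖) (outerEnd R) (𝓝 1) := by
    have := (tendsto_norm_of_tendsto_outerEnd tendsto_id).mul
      (tendsto_norm_of_tendsto_innerEnd (ho.comp tendsto_conj_outerEnd))
    simpa [Function.comp_def, hR0.ne'] using this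
  obtain ⟨c, hc, hψ⟩ := exists_eq_const_of_tendsto_norm_ends ha hab
    (f := fun z => z * F (conj z))
    (differentiableOn_id.mul hanti)
    (fun z hz => mul_ne_zero (ne_zero_of_mem_annulus ha hz)
      (ne_zero_of_mem_annulus ha (hmaps (conj_mem_annulus hz)))) hi' ho'
  refine ⟨c, hc, fun z hz => ?_⟩
  have h := hψ _ (conj_mem_annulus hz)
  simp only [Complex.conj_conj] at h
  rw [← h, mul_div_cancel_left₀ _ (ne_zero_of_mem_annulus ha (conj_mem_annulus hz))]

theorem eq_neg_one_of_forall_eq_div_conj {R : ℝ} (hR : 1 < R)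
    (hmaps : MapsTo F (annulus (1 / R) R) (annulus (1 / R) R))
    (hinv : ∀ z ∈ annulus (1 / R) R, F (F z) = z) (hfree : ∀ z ∈ annulus (1 / R) R, F z ≠ z)
    {c : ℂ} (hc : ‖c‖ = 1) (hF : ∀ z ∈ annulus (1 / R) R, F z = c / conj z) : c = -1 := by
  have h1 : (1 : ℂ) ∈ annulus (1 / R) R := mem_annulus_of_norm_eq_one hR norm_one
  have hF1 : F 1 = c := by simp [hF 1 h1]
  have hc0 : conj c ≠ 0 := by simp [← norm_ne_zero_iff, hc]
  have hdiv : c / conj c = 1 := by rw [← hF c (hF1 ▸ hmaps h1), ← hF1, hinv 1 h1]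
  have hmul : c * conj c = 1 := by simp [Complex.mul_conj', hc]
  have hsq : c * c = 1 := by
    calc c * c = c / conj c * (c * conj c) := by field_simp
      _ = 1 := by rw [hdiv, hmul, one_mul]
  exact (mul_self_eq_one_iff.1 hsq).resolve_left fun h => hfree 1 h1 (hF1.trans h)

end Antiholomorphic

/-- The only fixed-point-free antiholomorphic involution of the annulus
`A(R) = {z : 1/R < |z| < R}` is `z ↦ −1/conj z`. -/
theorem stmt_13 (R : ℝ) (hR : 1 < R) (F : ℂ → ℂ)
    (hmaps : MapsTo F {z : ℂ | 1 / R < ‖z‖ ∧ ‖z‖ < R}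
      {z : ℂ | 1 / R < ‖z‖ ∧ ‖z‖ < R})
    (hanti : DifferentiableOn ℂ (fun z => F (conj z))
      {z : ℂ | 1 / R < ‖z‖ ∧ ‖z‖ < R})
    (hinv : ∀ z ∈ {z : ℂ | 1 / R < ‖z‖ ∧ ‖z‖ < R}, F (F z) = z)
    (hfree : ∀ z ∈ {z : ℂ | 1 / R < ‖z‖ ∧ ‖z‖ < R}, F z ≠ z) :
    ∀ z ∈ {z : ℂ | 1 / R < ‖z‖ ∧ ‖z‖ < R}, F z = -1 / conj z := by
  have ha : 0 < 1 / R := by positivity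
  have hab : 1 / R < R := (div_lt_one (by linarith)).2 hR |>.trans hR
  have hcont : ContinuousOn F (annulus (1 / R) R) :=
    (hanti.continuousOn.comp Complex.continuous_conj.continuousOn fun _ => conj_mem_annulus).congr
      fun z _ => by simp
  rcases tendsto_ends_of_involutive ha.le hab hmaps hcont hinv with ⟨hi, ho⟩ | ⟨hi, ho⟩
  · obtain ⟨c, hc, hF⟩ := exists_eq_mul_conj_of_tendsto_ends ha hab hmaps hanti hi ho
    obtain ⟨w, hw, hcw⟩ := exists_norm_eq_one_mul_conj_eq hc
    have hwA := mem_annulus_of_norm_eq_one hR hw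
    exact absurd ((hF w hwA).trans hcw) (hfree w hwA)
  · obtain ⟨c, hc, hF⟩ := exists_eq_div_conj_of_tendsto_ends hR hmaps hanti hi ho
    rwa [eq_neg_one_of_forall_eq_div_conj hR hmaps hinv hfree hc hF] at hF
end

section
/- Let R > 1 and let φ be holomorphic on the annulus A(R) = {z ∈ ℂ : 1/R < |z| < R} satisfying φ(−1/conj(z)) = −conj(φ(z)) for all z ∈ A(R). For n ∈ ℤ, let a_n = (1/(2πi)) times the contour integral of φ(z)·z^(−n−1) over the positively oriented unit circle (the n-th Laurent coefficient of φ). Then a_0 is purely imaginary (Re(a_0) = 0), and a_{−n} = (−1)^{n+1}·conj(a_n) for every integer n ≥ 1. -/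
open ComplexConjugate

/-! On the unit circle the involution `z ↦ -1 / conj z` is `z ↦ -z`, so there the symmetry reads
`φ (-z) = -conj (φ z)`. Writing `aₙ` as the circle average of `φ z * z ^ (-n)`, the substitution
`z ↦ -z`, which preserves circle averages, together with `conj z = z⁻¹` gives
`a₋ₙ = -(-1)ⁿ conj aₙ`; for `n = 0` this says `conj a₀ = -a₀`. -/

open Complex Metric Real

theorem circleAverage_comp_neg {E : Type*} [NormedAddCommGroup E] [NormedSpace ℝ E]
    (f : ℂ → E) (R : ℝ) :
    circleAverage (fun z ↦ f (-z)) 0 R = circleAverage f 0 R := by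
  rw [← circleAverage_neg_radius (R := R)]
  simp only [circleAverage_def, circleMap_zero, ofReal_neg, neg_mul, neg_neg]

theorem circleAverage_conj (f : ℂ → ℂ) (c : ℂ) (R : ℝ) :
    circleAverage (fun z ↦ conj (f z)) c R = conj (circleAverage f c R) := by
  simp only [circleAverage_def, intervalIntegral, ← integral_conj, map_sub, real_smul,
    map_mul, conj_ofReal]

theorem circleAverage_eq_two_pi_I_inv_mul_circleIntegral (f : ℂ → ℂ) (n : ℤ) {R : ℝ}
    (hR : 0 < R) :
    circleAverage (fun z ↦ f z * z ^ (-n)) 0 R =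
      (2 * π * I)⁻¹ * ∮ z in C(0, R), f z * z ^ (-n - 1) := by
  rw [circleAverage_eq_circleIntegral hR.ne', smul_eq_mul]
  congr 1
  refine circleIntegral.integral_congr hR.le fun z hz ↦ ?_
  have hz0 : z ≠ 0 := ne_of_mem_sphere hz hR.ne'
  simp only [sub_zero, smul_eq_mul, zpow_sub₀ hz0, zpow_one]
  field_simp

theorem neg_one_div_conj_of_mem_sphere {z : ℂ} (hz : z ∈ sphere (0 : ℂ) 1) :
    -1 / conj z = -z := by
  rw [neg_div, one_div, ← inv_eq_conj (by simpa using hz), inv_inv]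

theorem circleAverage_mul_zpow_eq_of_conj_symm {φ : ℂ → ℂ}
    (hφ : ∀ z ∈ sphere (0 : ℂ) 1, φ (-z) = -conj (φ z)) (n : ℤ) :
    circleAverage (fun z ↦ φ z * z ^ n) 0 1 =
      -(-1) ^ n * conj (circleAverage (fun z ↦ φ z * z ^ (-n)) 0 1) := by
  rw [← circleAverage_comp_neg, ← circleAverage_conj, ← smul_eq_mul, ← circleAverage_fun_smul]
  refine circleAverage_congr_sphere fun z hz ↦ ?_
  have hz : ‖z‖ = 1 := by simpa using hz
  simp only [map_mul, map_zpow₀, ← inv_eq_conj hz, hφ z (by simpa using hz), inv_zpow', neg_neg,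
    smul_eq_mul]
  rw [neg_eq_neg_one_mul z, mul_zpow]
  ring

theorem stmt_15_general (R : ℝ) (hR : 1 < R) (φ : ℂ → ℂ)
    (hsym : ∀ z ∈ {z : ℂ | 1 / R < ‖z‖ ∧ ‖z‖ < R},
      φ (-1 / conj z) = -conj (φ z))
    (a : ℤ → ℂ)
    (ha : ∀ n : ℤ, a n = (2 * Real.pi * Complex.I)⁻¹ * ∮ z in C(0, 1), φ z * z ^ (-n - 1)) :
    (a 0).re = 0 ∧ ∀ n : ℕ, 1 ≤ n → a (-(n : ℤ)) = (-1) ^ (n + 1) * conj (a (n : ℤ)) := by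
  have hsphere : ∀ z ∈ sphere (0 : ℂ) 1, φ (-z) = -conj (φ z) := fun z hz ↦ by
    have hz' : ‖z‖ = 1 := by simpa using hz
    rw [← hsym z ⟨by rw [hz', div_lt_one (by linarith)]; exact hR, by rwa [hz']⟩,
      neg_one_div_conj_of_mem_sphere hz]
  have ha' : ∀ n : ℤ, a n = circleAverage (fun z ↦ φ z * z ^ (-n)) 0 1 := fun n ↦ by
    rw [ha, circleAverage_eq_two_pi_I_inv_mul_circleIntegral _ _ one_pos]
  have hcoeff : ∀ n : ℤ, a (-n) = -(-1) ^ n * conj (a n) := fun n ↦ by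
    simpa only [ha', neg_neg] using circleAverage_mul_zpow_eq_of_conj_symm hsphere n
  refine ⟨?_, fun n _ ↦ ?_⟩
  · have h0 := congrArg re (hcoeff 0)
    simp only [neg_zero, zpow_zero, neg_mul, one_mul, neg_re, conj_re] at h0
    linarith
  · rw [hcoeff, zpow_natCast, pow_succ]
    ring

/-- If `φ` is holomorphic on the annulus `A(R)` and satisfies `φ(−1/conj z) = −conj (φ z)`,
then its Laurent coefficients `aₙ = (1/(2πi)) ∮ φ(z) z^(−n−1) dz` satisfy `Re a₀ = 0` and
`a₋ₙ = (−1)^(n+1) conj aₙ` for all `n ≥ 1`. -/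
theorem stmt_15 (R : ℝ) (hR : 1 < R) (φ : ℂ → ℂ)
    (hhol : DifferentiableOn ℂ φ {z : ℂ | 1 / R < ‖z‖ ∧ ‖z‖ < R})
    (hsym : ∀ z ∈ {z : ℂ | 1 / R < ‖z‖ ∧ ‖z‖ < R},
      φ (-1 / conj z) = -conj (φ z))
    (a : ℤ → ℂ)
    (ha : ∀ n : ℤ, a n = (2 * Real.pi * Complex.I)⁻¹ * ∮ z in C(0, 1), φ z * z ^ (-n - 1)) :
    (a 0).re = 0 ∧ ∀ n : ℕ, 1 ≤ n → a (-(n : ℤ)) = (-1) ^ (n + 1) * conj (a (n : ℤ)) :=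
  stmt_15_general R hR φ hsym a ha
end

section
/- Let m₁ = 2, m₂ = (2 + √13)/3, and f(z) = (z − m₁)(z − m₂)(m₁·z + 1)(m₂·z + 1)/z². Let R > 1, let φ be holomorphic on the annulus A(R) = {z ∈ ℂ : 1/R < |z| < R}, and let k ≥ 3 be an integer. Then the contour integral of f(w)·φ(w^k)/w over the positively oriented unit circle equals 0. -/
/-!
Rotating the circle by a primitive `k`-th root of unity `ζ` leaves `φ(w^k)` unchanged and
multiplies `w^j dw` by `ζ^(j+1)`, so `∮ w^j φ(w^k) dw = 0` unless `k ∣ j + 1`. The integrand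
`f(w) φ(w^k)/w` is a combination of such terms with `j ∈ {1, 0, -1, -2, -3}`; for `k ≥ 3` only
`j = -1` survives, and its coefficient `(1 - m₁²)(1 - m₂²) - 2 m₁ m₂` vanishes for the given
`m₁, m₂`.
-/

open Complex Metric Real

section Rotation

variable {E : Type*} [NormedAddCommGroup E] [NormedSpace ℂ E]

lemma exp_mul_circleMap (R θ t : ℝ) :
    exp (θ * I) * circleMap 0 R t = circleMap 0 R (t + θ) := by
  simp only [circleMap_zero, ofReal_add, add_mul, Complex.exp_add]
  ring

theorem circleIntegral_comp_exp_mul (g : ℂ → E) (R θ : ℝ) :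
    (∮ z in C(0, R), exp (θ * I) • g (exp (θ * I) * z)) = ∮ z in C(0, R), g z := by
  set F : ℝ → E := fun t => deriv (circleMap 0 R) t • g (circleMap 0 R t)
  have hF : Function.Periodic F (2 * π) := fun t => by
    simp only [F, periodic_circleMap 0 R t, deriv_circleMap]
  calc (∮ z in C(0, R), exp (θ * I) • g (exp (θ * I) * z))
      = ∫ t in (0)..2 * π, F (t + θ) := by
        refine intervalIntegral.integral_congr fun t _ => ?_
        simp only [F, deriv_circleMap, smul_smul, ← exp_mul_circleMap]
        ring_nf
    _ = ∮ z in C(0, R), g z := by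
        rw [intervalIntegral.integral_comp_add_right, zero_add, add_comm,
          hF.intervalIntegral_add_eq θ 0, zero_add]
        rfl

theorem circleIntegral_zpow_smul_comp_pow_eq_zero (φ : ℂ → E) {k : ℕ} (hk : k ≠ 0) {j : ℤ}
    (hj : ¬(k : ℤ) ∣ j + 1) (R : ℝ) :
    (∮ z in C(0, R), z ^ j • φ (z ^ k)) = 0 := by
  set θ : ℝ := 2 * π / k
  have hζ : IsPrimitiveRoot (exp (θ * I)) k := by
    convert Complex.isPrimitiveRoot_exp k hk using 2
    push_cast [θ]
    ring
  have hrot := circleIntegral_comp_exp_mul (fun z => z ^ j • φ (z ^ k)) R θ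
  simp only [mul_pow, hζ.pow_eq_one, one_mul, mul_zpow, mul_smul] at hrot
  rw [circleIntegral.integral_smul, circleIntegral.integral_smul, smul_smul,
    ← zpow_one_add₀ (Complex.exp_ne_zero _), add_comm] at hrot
  have hfix : (exp (θ * I) ^ (j + 1) - 1) • (∮ z in C(0, R), z ^ j • φ (z ^ k)) = 0 := by
    rw [sub_smul, one_smul, hrot, sub_self]
  exact (smul_eq_zero.mp hfix).resolve_left
    (sub_ne_zero.mpr ((hζ.zpow_eq_one_iff_dvd _).not.mpr hj))

theorem circleIntegral_sum_zpow_smul_comp_pow_eq_zero {ι : Type*} (s : Finset ι) (c : ι → ℂ)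
    (e : ι → ℤ) {φ : ℂ → E} {k : ℕ} (hk : k ≠ 0) (he : ∀ i ∈ s, ¬(k : ℤ) ∣ e i + 1) {R : ℝ}
    (hR : R ≠ 0) (hφ : CircleIntegrable (fun z => φ (z ^ k)) 0 R) :
    (∮ z in C(0, R), (∑ i ∈ s, c i * z ^ e i) • φ (z ^ k)) = 0 := by
  have hzpow (j : ℤ) : ContinuousOn (fun z : ℂ => z ^ j) (sphere 0 |R|) := fun z hz =>
    (continuousAt_zpow₀ z j
      (.inl (ne_zero_of_mem_sphere (abs_ne_zero.mpr hR) ⟨z, hz⟩))).continuousWithinAt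
  simp only [Finset.sum_smul]
  rw [circleIntegral.integral_fun_sum (f := fun i z => (c i * z ^ e i) • φ (z ^ k)) fun i _ =>
    hφ.continuousOn_smul (continuousOn_const.mul (hzpow (e i)))]
  refine Finset.sum_eq_zero fun i hi => ?_
  simp only [mul_smul]
  rw [circleIntegral.integral_smul, circleIntegral_zpow_smul_comp_pow_eq_zero φ hk (he i hi),
    smul_zero]

end Rotation

/-- `hab` is the vanishing of the coefficient of `z⁻¹`. -/
theorem laurent_expansion_of_residue_eq_zero {a b : ℂ}
    (hab : (1 - a ^ 2) * (1 - b ^ 2) = 2 * (a * b)) {z : ℂ} (hz : z ≠ 0) :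
    (z - a) * (z - b) * (a * z + 1) * (b * z + 1) / z ^ 2 / z =
      ∑ i : Fin 4, ![a * b, a * (1 - b ^ 2) + b * (1 - a ^ 2),
        -(a * (1 - b ^ 2) + b * (1 - a ^ 2)), a * b] i * z ^ ![(1 : ℤ), 0, -2, -3] i := by
  simp only [Fin.sum_univ_four, Matrix.cons_val, zpow_neg, zpow_ofNat]
  field_simp
  linear_combination z ^ 2 * hab

/-- For `m₁ = 2`, `m₂ = (2 + √13)/3`, `f(z) = (z − m₁)(z − m₂)(m₁z + 1)(m₂z + 1)/z²`,
any `φ` holomorphic on the annulus `A(R)` with `R > 1`, and any integer `k ≥ 3`, the contour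
integral of `f(w) φ(w^k)/w` over the positively oriented unit circle vanishes. -/
theorem stmt_18 (m₁ m₂ : ℝ) (hm₁ : m₁ = 2) (hm₂ : m₂ = (2 + Real.sqrt 13) / 3)
    (f : ℂ → ℂ)
    (hf : ∀ z : ℂ, f z =
      (z - (m₁ : ℂ)) * (z - (m₂ : ℂ)) * ((m₁ : ℂ) * z + 1) * ((m₂ : ℂ) * z + 1) / z ^ 2)
    (R : ℝ) (hR : 1 < R) (φ : ℂ → ℂ)
    (hhol : DifferentiableOn ℂ φ {z : ℂ | 1 / R < ‖z‖ ∧ ‖z‖ < R})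
    (k : ℕ) (hk : 3 ≤ k) :
    (∮ w in C(0, 1), f w * φ (w ^ k) / w) = 0 := by
  have hres : (1 - (m₁ : ℂ) ^ 2) * (1 - (m₂ : ℂ) ^ 2) = 2 * (m₁ * m₂) := by
    have h13 : ((√13 : ℝ) : ℂ) ^ 2 = 13 := by exact_mod_cast Real.sq_sqrt (by norm_num)
    subst hm₁ hm₂
    push_cast
    linear_combination (1 / 3 : ℂ) * h13
  have hφ : CircleIntegrable (fun w => φ (w ^ k)) 0 1 := by
    refine (hhol.continuousOn.comp (continuous_pow k).continuousOn fun w hw => ?_).circleIntegrable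
      zero_le_one
    have hw1 : ‖w‖ = 1 := by simpa using hw
    simp [norm_pow, hw1, hR, inv_lt_one_of_one_lt₀ hR]
  -- the coefficients `?c` and exponents `?e` are read off from the Laurent expansion
  refine (circleIntegral.integral_congr zero_le_one fun w hw => ?_).trans
    (circleIntegral_sum_zpow_smul_comp_pow_eq_zero (Finset.univ : Finset (Fin 4)) ?c ?e
      (by omega) ?_ one_ne_zero hφ)
  · rw [hf, mul_div_right_comm,
      laurent_expansion_of_residue_eq_zero hres (ne_zero_of_mem_sphere one_ne_zero ⟨w, hw⟩)]
    rfl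
  · intro i _ hdvd
    have := Int.eq_zero_of_dvd_of_natAbs_lt_natAbs hdvd (by fin_cases i <;> simp <;> omega)
    fin_cases i <;> simp at this
end
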